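/- arXiv:1612.09577 — 4 statements merged into one kernel-verified Lean document; each statement's English description precedes it below -/
import Mathlib

section
/- Let q be continuous and real-valued on [0,d], and let f₀ solve f₀'' = q f₀ with f₀(0)=1, f₀'(0)=0, with f₀ nonvanishing on [0,d]. Define X^{(0)} ≡ 1, X^{(n)}(x) = n∫₀^x X^{(n-1)}(s)(f₀²(s))^{(-1)^n} ds, and X̃^{(0)} ≡ 1, X̃^{(n)}(x) = n∫₀^x X̃^{(n-1)}(s)(f₀²(s))^{(-1)^{n-1}} ds, and set φ_k = f₀·X^{(k)} for k odd and φ_k = f₀·X̃^{(k)} for k even. Then for each k ≥ 2, the function φ_k satisfies φ_k'' - q·φ_k = k(k-1)·φ_{k-2} on [0,d], together with φ_k(0) = 0 and φ_k'(0) = 0. -/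
/-!
Write `φ = f Y` with `Y' = k Z / f²` and `Z' = (k - 1) W f²` (here `Y, Z, W` are the auxiliary
functions of indices `k, k - 1, k - 2`, whose weights `(f₀²)^(±1)` alternate). Then
`(f Y)' = f' Y + k Z / f`, and in the second derivative the two terms `± k f' Z / f²` cancel, leaving
`(f Y)'' = f'' Y + k (k - 1) f W`. Everything is differentiated on the connected component of
`{f₀ ≠ 0}` containing `0`: an open interval containing `[0, d]` on which all integrands are continuous.
-/

open MeasureTheory Set

open Filter Topology

theorem exists_isOpen_ordConnected_nonvanishing {f : ℝ → ℝ} (hf : Continuous f) {a b : ℝ}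
    (ha : f a ≠ 0) (hab : ∀ x ∈ Icc a b, f x ≠ 0) :
    ∃ S : Set ℝ, IsOpen S ∧ S.OrdConnected ∧ a ∈ S ∧ Icc a b ⊆ S ∧ ∀ x ∈ S, f x ≠ 0 := by
  let U : Set ℝ := {x | f x ≠ 0}
  have hU : IsOpen U := isOpen_ne_fun hf continuous_const
  refine ⟨connectedComponentIn U a, hU.connectedComponentIn,
    isPreconnected_connectedComponentIn.ordConnected, mem_connectedComponentIn ha,
    fun x hx => ?_, fun x hx => connectedComponentIn_subset U a hx⟩
  exact isPreconnected_Icc.subset_connectedComponentIn (left_mem_Icc.2 (hx.1.trans hx.2)) hab hx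

theorem ContinuousOn.hasDerivAt_integral_of_ordConnected {g : ℝ → ℝ} {S : Set ℝ} {a x : ℝ}
    (hg : ContinuousOn g S) (hS : IsOpen S) (hS' : S.OrdConnected) (ha : a ∈ S) (hx : x ∈ S) :
    HasDerivAt (fun u => ∫ s in a..u, g s) (g x) x :=
  intervalIntegral.integral_hasDerivAt_right (hg.mono (hS'.uIcc_subset ha hx)).intervalIntegrable
    (hg.stronglyMeasurableAtFilter hS x hx) (hg.continuousAt (hS.mem_nhds hx))

theorem ContDiff.hasDerivAt_deriv {f : ℝ → ℝ} (hf : ContDiff ℝ 2 f) (x : ℝ) :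
    HasDerivAt (deriv f) (deriv (deriv f) x) x :=
  ((contDiff_succ_iff_deriv.1 hf).2.2.differentiable one_ne_zero x).hasDerivAt

section Recursion

variable {S : Set ℝ} {Y w : ℕ → ℝ → ℝ}

theorem hasDerivAt_of_recursion (hS : IsOpen S) (hS' : S.OrdConnected) (h0 : 0 ∈ S)
    (hY : ∀ n : ℕ, 1 ≤ n → ∀ x, Y n x = n * ∫ s in (0:ℝ)..x, Y (n - 1) s * w n s)
    {n : ℕ} (hn : 1 ≤ n) (hcont : ContinuousOn (fun s => Y (n - 1) s * w n s) S)
    {x : ℝ} (hx : x ∈ S) :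
    HasDerivAt (Y n) (n * (Y (n - 1) x * w n x)) x := by
  rw [show Y n = fun u => n * ∫ s in (0:ℝ)..u, Y (n - 1) s * w n s from funext (hY n hn)]
  exact (hcont.hasDerivAt_integral_of_ordConnected hS hS' h0 hx).const_mul _

theorem continuousOn_of_recursion (hS : IsOpen S) (hS' : S.OrdConnected) (h0 : 0 ∈ S)
    (hY0 : ∀ x, Y 0 x = 1)
    (hY : ∀ n : ℕ, 1 ≤ n → ∀ x, Y n x = n * ∫ s in (0:ℝ)..x, Y (n - 1) s * w n s)
    (hw : ∀ n, ContinuousOn (w n) S) (n : ℕ) : ContinuousOn (Y n) S := by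
  induction n with
  | zero => simpa [funext hY0] using continuousOn_const
  | succ n ih =>
    exact fun x hx => (hasDerivAt_of_recursion hS hS' h0 hY (n := n + 1) (by omega)
      (ih.mul (hw _)) hx).continuousAt.continuousWithinAt

theorem recursion_apply_zero
    (hY : ∀ n : ℕ, 1 ≤ n → ∀ x, Y n x = n * ∫ s in (0:ℝ)..x, Y (n - 1) s * w n s)
    {n : ℕ} (hn : 1 ≤ n) : Y n 0 = 0 := by
  rw [hY n hn, intervalIntegral.integral_same, mul_zero]

end Recursion

section Calculus

variable {f Y Z W : ℝ → ℝ} {S : Set ℝ} {k x : ℝ}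

theorem hasDerivAt_mul_of_hasDerivAt_div_sq (hf : DifferentiableAt ℝ f x) (hfx : f x ≠ 0)
    (hY : HasDerivAt Y (k * (Z x * (f x ^ 2)⁻¹)) x) :
    HasDerivAt (fun t => f t * Y t) (deriv f x * Y x + k * Z x / f x) x := by
  refine (hf.hasDerivAt.mul hY).congr_deriv ?_
  field_simp

theorem deriv_deriv_mul_of_hasDerivAt (hS : IsOpen S) (hf : ContDiff ℝ 2 f)
    (hne : ∀ x ∈ S, f x ≠ 0)
    (hY : ∀ x ∈ S, HasDerivAt Y (k * (Z x * (f x ^ 2)⁻¹)) x)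
    (hZ : ∀ x ∈ S, HasDerivAt Z ((k - 1) * (W x * f x ^ 2)) x) (hx : x ∈ S) :
    deriv (deriv fun t => f t * Y t) x = deriv (deriv f) x * Y x + k * (k - 1) * (f x * W x) := by
  have hfirst : deriv (fun t => f t * Y t) =ᶠ[𝓝 x] fun t => deriv f t * Y t + k * Z t / f t :=
    eventually_of_mem (hS.mem_nhds hx) fun t ht =>
      (hasDerivAt_mul_of_hasDerivAt_div_sq (hf.differentiable two_ne_zero t) (hne t ht)
        (hY t ht)).deriv
  have hsecond : HasDerivAt (fun t => deriv f t * Y t + k * Z t / f t) _ x :=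
    ((hf.hasDerivAt_deriv x).mul (hY x hx)).add
      (((hZ x hx).const_mul k).div (hf.differentiable two_ne_zero x).hasDerivAt (hne x hx))
  rw [hfirst.deriv_eq, hsecond.deriv]
  have := hne x hx
  field_simp
  ring

end Calculus

section FormalPowers

variable {S : Set ℝ} {f : ℝ → ℝ} {Y : ℕ → ℝ → ℝ} {c : ℕ → ℤ}

theorem hasDerivAt_formalPower (hS : IsOpen S) (hS' : S.OrdConnected) (h0 : 0 ∈ S)
    (hf : Continuous f) (hne : ∀ x ∈ S, f x ≠ 0) (hY0 : ∀ x, Y 0 x = 1)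
    (hY : ∀ n : ℕ, 1 ≤ n → ∀ x, Y n x = n * ∫ s in (0:ℝ)..x, Y (n - 1) s * (f s ^ 2) ^ c n)
    {n : ℕ} (hn : 1 ≤ n) {x : ℝ} (hx : x ∈ S) :
    HasDerivAt (Y n) (n * (Y (n - 1) x * (f x ^ 2) ^ c n)) x := by
  have hw (m : ℕ) : ContinuousOn (fun s => (f s ^ 2) ^ c m) S :=
    (hf.continuousOn.pow 2).zpow₀ _ fun s hs => .inl (pow_ne_zero 2 (hne s hs))
  exact hasDerivAt_of_recursion hS hS' h0 hY hn
    ((continuousOn_of_recursion hS hS' h0 hY0 hY hw _).mul (hw n)) hx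

theorem hasDerivAt_formalPower_of_neg_one (hS : IsOpen S) (hS' : S.OrdConnected) (h0 : 0 ∈ S)
    (hf : Continuous f) (hne : ∀ x ∈ S, f x ≠ 0) (hY0 : ∀ x, Y 0 x = 1)
    (hY : ∀ n : ℕ, 1 ≤ n → ∀ x, Y n x = n * ∫ s in (0:ℝ)..x, Y (n - 1) s * (f s ^ 2) ^ c n)
    {k : ℕ} (hk : 1 ≤ k) (hck : c k = -1) {x : ℝ} (hx : x ∈ S) :
    HasDerivAt (Y k) (k * (Y (k - 1) x * (f x ^ 2)⁻¹)) x := by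
  simpa [hck] using hasDerivAt_formalPower hS hS' h0 hf hne hY0 hY hk hx

theorem deriv_mul_formalPower_zero (hS : IsOpen S) (hS' : S.OrdConnected) (h0 : 0 ∈ S)
    (hf : ContDiff ℝ 2 f) (hne : ∀ x ∈ S, f x ≠ 0) (hY0 : ∀ x, Y 0 x = 1)
    (hY : ∀ n : ℕ, 1 ≤ n → ∀ x, Y n x = n * ∫ s in (0:ℝ)..x, Y (n - 1) s * (f s ^ 2) ^ c n)
    {k : ℕ} (hk : 2 ≤ k) (hck : c k = -1) :
    deriv (fun t => f t * Y k t) 0 = 0 := by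
  rw [(hasDerivAt_mul_of_hasDerivAt_div_sq (hf.differentiable two_ne_zero 0) (hne 0 h0)
    (hasDerivAt_formalPower_of_neg_one hS hS' h0 hf.continuous hne hY0 hY (by omega) hck h0)).deriv,
    recursion_apply_zero hY (by omega : 1 ≤ k), recursion_apply_zero hY (by omega : 1 ≤ k - 1)]
  simp

theorem deriv_deriv_mul_formalPower (hS : IsOpen S) (hS' : S.OrdConnected) (h0 : 0 ∈ S)
    (hf : ContDiff ℝ 2 f) (hne : ∀ x ∈ S, f x ≠ 0) (hY0 : ∀ x, Y 0 x = 1)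
    (hY : ∀ n : ℕ, 1 ≤ n → ∀ x, Y n x = n * ∫ s in (0:ℝ)..x, Y (n - 1) s * (f s ^ 2) ^ c n)
    {k : ℕ} (hk : 2 ≤ k) (hck : c k = -1) (hck1 : c (k - 1) = 1) {x : ℝ} (hx : x ∈ S) :
    deriv (deriv fun t => f t * Y k t) x =
      deriv (deriv f) x * Y k x + k * (k - 1) * (f x * Y (k - 2) x) := by
  refine deriv_deriv_mul_of_hasDerivAt hS hf hne
    (fun x hx => hasDerivAt_formalPower_of_neg_one hS hS' h0 hf.continuous hne hY0 hY
      (by omega) hck hx) (fun x hx => ?_) hx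
  have h := hasDerivAt_formalPower hS hS' h0 hf.continuous hne hY0 hY (n := k - 1) (by omega) hx
  rwa [hck1, zpow_one, Nat.sub_sub, Nat.cast_sub (by omega : 1 ≤ k), Nat.cast_one] at h

end FormalPowers

theorem formal_powers_ODE_general (d : ℝ) (q f₀ : ℝ → ℝ)
    (hf₀C2 : ContDiff ℝ 2 f₀)
    (hode : ∀ x ∈ Icc 0 d, deriv (deriv f₀) x = q x * f₀ x)
    (hf₀0 : f₀ 0 = 1)
    (hf₀ne : ∀ x ∈ Icc 0 d, f₀ x ≠ 0)
    (X Xt : ℕ → ℝ → ℝ)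
    (hX0 : ∀ x, X 0 x = 1)
    (hXt0 : ∀ x, Xt 0 x = 1)
    (hX : ∀ n : ℕ, 1 ≤ n → ∀ x,
      X n x = n * ∫ s in (0:ℝ)..x, X (n - 1) s * (f₀ s ^ 2) ^ ((-1 : ℤ) ^ n))
    (hXt : ∀ n : ℕ, 1 ≤ n → ∀ x,
      Xt n x = n * ∫ s in (0:ℝ)..x, Xt (n - 1) s * (f₀ s ^ 2) ^ ((-1 : ℤ) ^ (n - 1)))
    (φ : ℕ → ℝ → ℝ)
    (hφ : ∀ k x, φ k x = if Odd k then f₀ x * X k x else f₀ x * Xt k x) :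
    ∀ k : ℕ, 2 ≤ k →
      (∀ x ∈ Icc 0 d, deriv (deriv (φ k)) x - q x * φ k x = k * (k - 1) * φ (k - 2) x) ∧
      φ k 0 = 0 ∧ deriv (φ k) 0 = 0 := by
  intro k hk
  obtain ⟨S, hS, hS', h0, hIcc, hne⟩ :=
    exists_isOpen_ordConnected_nonvanishing hf₀C2.continuous (by simp [hf₀0]) hf₀ne
  obtain ⟨Y, c, hY0, hY, hck, hck1, hφk, hφk2⟩ : ∃ (Y : ℕ → ℝ → ℝ) (c : ℕ → ℤ),
      (∀ x, Y 0 x = 1) ∧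
      (∀ n : ℕ, 1 ≤ n → ∀ x, Y n x = n * ∫ s in (0:ℝ)..x, Y (n - 1) s * (f₀ s ^ 2) ^ c n) ∧
      c k = -1 ∧ c (k - 1) = 1 ∧
      φ k = (fun x => f₀ x * Y k x) ∧ φ (k - 2) = fun x => f₀ x * Y (k - 2) x := by
    rcases Nat.even_or_odd k with hk' | hk'
    · refine ⟨Xt, fun n => (-1) ^ (n - 1), hXt0, hXt, Odd.neg_one_pow (by grind),
        Even.neg_one_pow (by grind), ?_, ?_⟩ <;>
        simp [funext_iff, hφ, Nat.odd_sub, hk', hk, parity_simps]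
    · refine ⟨X, fun n => (-1) ^ n, hX0, hX, hk'.neg_one_pow, Even.neg_one_pow (by grind),
        ?_, ?_⟩ <;>
        simp [funext_iff, hφ, Nat.odd_sub, hk', hk, parity_simps]
  simp only [hφk, hφk2]
  refine ⟨fun x hx => ?_, by simp [recursion_apply_zero hY (by omega : 1 ≤ k)],
    deriv_mul_formalPower_zero hS hS' h0 hf₀C2 hne hY0 hY hk hck⟩
  rw [deriv_deriv_mul_formalPower hS hS' h0 hf₀C2 hne hY0 hY hk hck hck1 (hIcc hx), hode x hx]
  ring

theorem formal_powers_ODE (d : ℝ) (q f₀ : ℝ → ℝ)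
    (hq : ContinuousOn q (Icc 0 d))
    (hf₀C2 : ContDiff ℝ 2 f₀)
    (hode : ∀ x ∈ Icc 0 d, deriv (deriv f₀) x = q x * f₀ x)
    (hf₀0 : f₀ 0 = 1) (hf₀'0 : deriv f₀ 0 = 0)
    (hf₀ne : ∀ x ∈ Icc 0 d, f₀ x ≠ 0)
    (X Xt : ℕ → ℝ → ℝ)
    (hX0 : ∀ x, X 0 x = 1)
    (hXt0 : ∀ x, Xt 0 x = 1)
    (hX : ∀ n : ℕ, 1 ≤ n → ∀ x,
      X n x = n * ∫ s in (0:ℝ)..x, X (n - 1) s * (f₀ s ^ 2) ^ ((-1 : ℤ) ^ n))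
    (hXt : ∀ n : ℕ, 1 ≤ n → ∀ x,
      Xt n x = n * ∫ s in (0:ℝ)..x, Xt (n - 1) s * (f₀ s ^ 2) ^ ((-1 : ℤ) ^ (n - 1)))
    (φ : ℕ → ℝ → ℝ)
    (hφ : ∀ k x, φ k x = if Odd k then f₀ x * X k x else f₀ x * Xt k x) :
    ∀ k : ℕ, 2 ≤ k →
      (∀ x ∈ Icc 0 d, deriv (deriv (φ k)) x - q x * φ k x = k * (k - 1) * φ (k - 2) x) ∧
      φ k 0 = 0 ∧ deriv (φ k) 0 = 0 :=
  formal_powers_ODE_general d q f₀ hf₀C2 hode hf₀0 hf₀ne X Xt hX0 hXt0 hX hXt φ hφ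
end

section
/- Under the hypotheses of the formal powers construction (q continuous on [0,d], f₀ nonvanishing solution of f₀''=q f₀ with f₀(0)=1, f₀'(0)=0), the series u(ω,x) = Σ_{n=0}^∞ (-iω)^n φ_n(x)/n! converges uniformly in x on [0,d] for each fixed ω ∈ ℂ, and its sum solves -u'' + q u = ω² u with u(0)=1, u'(0) = -iω. -/
/-!
Write `φ n = f₀ * Y n n`, where `Y n` is the family `X` for odd `n` and `X̃` for even `n`; the
weight in the step `m → m + 1` of `Y n` is then `(f₀²) ^ (-1) ^ (n + m)`. Hence
`(Y n n)' = n Y n (n-1) / f₀²` and `(Y n (n-1))' = (n-1) Y n (n-2) f₀²`, and with `f₀'' = q f₀`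
this gives `φ n'' = q φ n + n (n-1) φ (n-2)`.

On a compact interval `[a, b] ⊇ [0, d]` with `a < 0` on which `f₀` does not vanish, let `M` bound
`f₀²` and `f₀⁻²`. Each integration gains a factor `|x| / (m + 1)` that cancels the prefactor
`m + 1`, so `|Y n m x| ≤ (M |x|)^m`, and `φ n`, `φ n'`, `φ n''` grow at most geometrically in `n`.
Against `1 / n!` this makes the series and its first two termwise derivatives converge uniformly
on `[a, b]`. Shifting the index by two turns `∑ cⁿ n (n-1) φ (n-2) / n!` into `c² u`, so
`u'' = (q + c²) u` with `c = -iω`.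
-/

open MeasureTheory Set Filter Topology

noncomputable def egfTerm (c : ℂ) (φ : ℕ → ℝ → ℝ) (n : ℕ) (x : ℝ) : ℂ :=
  c ^ n * (φ n x : ℂ) / n.factorial

def GeomBoundedOn (φ : ℕ → ℝ → ℝ) (s : Set ℝ) : Prop :=
  ∃ C K : ℝ, ∀ n, ∀ x ∈ s, |φ n x| ≤ C * K ^ n

namespace GeomBoundedOn

variable {φ ψ : ℕ → ℝ → ℝ} {s t : Set ℝ}

lemma of_le_pow_sub {K : ℝ} (k : ℕ) (h : ∀ n, ∀ x ∈ s, |φ n x| ≤ K ^ (n - k)) :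
    GeomBoundedOn φ s := by
  refine ⟨1, max 1 |K|, fun n x hx => (h n x hx).trans ?_⟩
  calc K ^ (n - k) ≤ |K| ^ (n - k) := (le_abs_self _).trans (abs_pow K _).le
    _ ≤ max 1 |K| ^ (n - k) := pow_le_pow_left₀ (abs_nonneg _) (le_max_right _ _) _
    _ ≤ 1 * max 1 |K| ^ n := by
      rw [one_mul]; exact pow_le_pow_right₀ (le_max_left _ _) (Nat.sub_le _ _)

lemma exists_nonneg (h : GeomBoundedOn φ s) :
    ∃ C K, 0 ≤ C ∧ 0 ≤ K ∧ ∀ n, ∀ x ∈ s, |φ n x| ≤ C * K ^ n := by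
  obtain ⟨C, K, h⟩ := h
  refine ⟨|C|, |K|, abs_nonneg _, abs_nonneg _, fun n x hx => (h n x hx).trans ?_⟩
  rw [← abs_pow, ← abs_mul]
  exact le_abs_self _

lemma mono (h : GeomBoundedOn φ t) (hst : s ⊆ t) : GeomBoundedOn φ s :=
  let ⟨C, K, h⟩ := h
  ⟨C, K, fun n x hx => h n x (hst hx)⟩

lemma add (hφ : GeomBoundedOn φ s) (hψ : GeomBoundedOn ψ s) :
    GeomBoundedOn (fun n x => φ n x + ψ n x) s := by
  obtain ⟨C, K, hC, hK, hφ⟩ := hφ.exists_nonneg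
  obtain ⟨D, L, hD, hL, hψ⟩ := hψ.exists_nonneg
  refine ⟨C + D, max K L, fun n x hx => (abs_add_le _ _).trans ?_⟩
  have hKn : K ^ n ≤ max K L ^ n := pow_le_pow_left₀ hK (le_max_left _ _) n
  have hLn : L ^ n ≤ max K L ^ n := pow_le_pow_left₀ hL (le_max_right _ _) n
  nlinarith [hφ n x hx, hψ n x hx, mul_le_mul_of_nonneg_left hKn hC,
    mul_le_mul_of_nonneg_left hLn hD]

lemma mul (hφ : GeomBoundedOn φ s) (hψ : GeomBoundedOn ψ s) :
    GeomBoundedOn (fun n x => φ n x * ψ n x) s := by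
  obtain ⟨C, K, hC, hK, hφ⟩ := hφ.exists_nonneg
  obtain ⟨D, L, hD, hL, hψ⟩ := hψ.exists_nonneg
  refine ⟨C * D, K * L, fun n x hx => ?_⟩
  rw [abs_mul, mul_pow]
  calc |φ n x| * |ψ n x| ≤ (C * K ^ n) * (D * L ^ n) :=
        mul_le_mul (hφ n x hx) (hψ n x hx) (abs_nonneg _) (by positivity)
    _ = C * D * (K ^ n * L ^ n) := by ring

lemma of_continuousOn {f : ℝ → ℝ} (hs : IsCompact s) (hf : ContinuousOn f s) :
    GeomBoundedOn (fun _ x => f x) s :=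
  let ⟨B, hB⟩ := hs.exists_bound_of_continuousOn hf
  ⟨B, 1, fun _ x hx => by simpa using hB x hx⟩

lemma natCast_sub (s : Set ℝ) (k : ℕ) : GeomBoundedOn (fun n _ => ((n - k : ℕ) : ℝ)) s :=
  ⟨1, 2, fun n _ _ => by
    rw [Nat.abs_cast, one_mul]
    exact_mod_cast (Nat.sub_le n k).trans n.lt_two_pow_self.le⟩

lemma exists_summable_bound (h : GeomBoundedOn φ s) (c : ℂ) :
    ∃ u : ℕ → ℝ, Summable u ∧ ∀ n, ∀ x ∈ s, ‖egfTerm c φ n x‖ ≤ u n := by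
  obtain ⟨C, K, h⟩ := h
  refine ⟨fun n => C * ((‖c‖ * K) ^ n / n.factorial),
    (Real.summable_pow_div_factorial _).mul_left C, fun n x hx => ?_⟩
  show _ ≤ C * ((‖c‖ * K) ^ n / n.factorial)
  rw [egfTerm, norm_div, norm_mul, norm_pow, Complex.norm_real, Complex.norm_natCast,
    Real.norm_eq_abs, mul_pow, ← mul_div_assoc]
  refine div_le_div_of_nonneg_right ?_ (Nat.cast_nonneg _)
  calc ‖c‖ ^ n * |φ n x| ≤ ‖c‖ ^ n * (C * K ^ n) := by gcongr; exact h n x hx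
    _ = C * (‖c‖ ^ n * K ^ n) := by ring

lemma summable_egfTerm (h : GeomBoundedOn φ s) (c : ℂ) {x : ℝ} (hx : x ∈ s) :
    Summable fun n => egfTerm c φ n x :=
  let ⟨_, hu, hle⟩ := h.exists_summable_bound c
  .of_norm_bounded hu fun n => hle n x hx

lemma tendstoUniformlyOn_tsum_egfTerm (h : GeomBoundedOn φ s) (c : ℂ) :
    TendstoUniformlyOn (fun N x => ∑ n ∈ Finset.range N, egfTerm c φ n x)
      (fun x => ∑' n, egfTerm c φ n x) atTop s :=
  let ⟨_, hu, hle⟩ := h.exists_summable_bound c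
  tendstoUniformlyOn_tsum_nat hu hle

lemma hasDerivAt_tsum_egfTerm (hs : IsOpen s) (hs' : IsPreconnected s)
    (hd : ∀ n, ∀ x ∈ s, HasDerivAt (φ n) (ψ n x) x) (hφ : GeomBoundedOn φ s)
    (hψ : GeomBoundedOn ψ s) (c : ℂ) {x : ℝ} (hx : x ∈ s) :
    HasDerivAt (fun y => ∑' n, egfTerm c φ n y) (∑' n, egfTerm c ψ n x) x := by
  obtain ⟨u, hu, hle⟩ := hψ.exists_summable_bound c
  refine hasDerivAt_tsum_of_isPreconnected hu hs hs' (fun n y hy => ?_) hle hx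
    (hφ.summable_egfTerm c hx) hx
  exact (((hd n y hy).ofReal_comp).const_mul _).div_const _

end GeomBoundedOn

lemma deriv_deriv_tsum_egfTerm {s : Set ℝ} {φ φ' φ'' : ℕ → ℝ → ℝ} (hs : IsOpen s)
    (hs' : IsPreconnected s) (hd : ∀ n, ∀ x ∈ s, HasDerivAt (φ n) (φ' n x) x)
    (hd' : ∀ n, ∀ x ∈ s, HasDerivAt (φ' n) (φ'' n x) x) (hφ : GeomBoundedOn φ s)
    (hφ' : GeomBoundedOn φ' s) (hφ'' : GeomBoundedOn φ'' s) (c : ℂ) {x : ℝ} (hx : x ∈ s) :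
    deriv (deriv fun y => ∑' n, egfTerm c φ n y) x = ∑' n, egfTerm c φ'' n x := by
  have hderiv : deriv (fun y => ∑' n, egfTerm c φ n y) =ᶠ[𝓝 x]
      fun y => ∑' n, egfTerm c φ' n y :=
    eventually_of_mem (hs.mem_nhds hx) fun y hy =>
      (hφ.hasDerivAt_tsum_egfTerm hs hs' hd hφ' c hy).deriv
  rw [hderiv.deriv_eq, (hφ'.hasDerivAt_tsum_egfTerm hs hs' hd' hφ'' c hx).deriv]

lemma tsum_egfTerm_of_eq_ite {φ : ℕ → ℝ → ℝ} {x : ℝ} (c : ℂ) (k : ℕ)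
    (h : ∀ n, φ n x = if n = k then 1 else 0) :
    ∑' n, egfTerm c φ n x = c ^ k / k.factorial := by
  rw [tsum_eq_single k fun n hn => by simp [egfTerm, h, hn]]
  simp [egfTerm, h]

lemma tsum_egfTerm_of_eq_add_shift {φ ψ : ℕ → ℝ → ℝ} {x r : ℝ} (c : ℂ)
    (hψ : ∀ n, ψ n x = r * φ n x + n * (n - 1 : ℕ) * φ (n - 2) x)
    (hs : Summable fun n => egfTerm c φ n x) :
    ∑' n, egfTerm c ψ n x = (r + c ^ 2) * ∑' n, egfTerm c φ n x := by
  set shift : ℕ → ℂ := fun n => c ^ n * ((n * (n - 1 : ℕ) * φ (n - 2) x : ℝ) : ℂ) / n.factorial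
  have hsplit : ∀ n, egfTerm c ψ n x = r * egfTerm c φ n x + shift n := fun n => by
    simp only [egfTerm, shift, hψ]; push_cast; ring
  have hshift : HasSum shift (c ^ 2 * ∑' n, egfTerm c φ n x) := by
    have hstep : ∀ n, shift (n + 2) = c ^ 2 * egfTerm c φ n x := fun n => by
      simp only [shift, egfTerm, Nat.add_sub_cancel, Nat.factorial_succ]
      have h1 : (n : ℂ) + 1 ≠ 0 := Nat.cast_add_one_ne_zero n
      have h2 : (n : ℂ) + 1 + 1 ≠ 0 := by exact_mod_cast Nat.succ_ne_zero (n + 1)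
      push_cast
      field_simp
      ring
    have h := (hasSum_nat_add_iff 2).mp ((funext hstep) ▸ hs.hasSum.mul_left (c ^ 2))
    simpa [Finset.sum_range_succ, shift] using h
  rw [tsum_congr hsplit, ((hs.hasSum.mul_left _).add hshift).tsum_eq]
  ring

lemma abs_integral_le_mul_abs_pow {f : ℝ → ℝ} {C x : ℝ} {k : ℕ}
    (hf : ∀ s ∈ uIcc 0 x, |f s| ≤ C * |s| ^ k) :
    |∫ s in (0:ℝ)..x, f s| ≤ C * |x| ^ (k + 1) / (k + 1) := by
  wlog hx : 0 ≤ x generalizing f x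
  · have hneg := this (f := fun s => f (-s)) (x := -x)
      (fun s hs => by simpa using hf (-s) (by
        rw [mem_uIcc] at hs ⊢
        rcases hs with h | h <;> [right; left] <;> constructor <;> linarith [h.1, h.2]))
      (by linarith)
    rwa [intervalIntegral.integral_comp_neg, neg_zero, neg_neg, intervalIntegral.integral_symm,
      abs_neg, abs_neg] at hneg
  have hle := intervalIntegral.norm_integral_le_of_norm_le (μ := volume) (f := f)
    (g := fun s => C * s ^ k) hx
    (Eventually.of_forall fun s hs => by
      simpa [abs_of_pos hs.1] using hf s (uIcc_of_le hx ▸ Ioc_subset_Icc_self hs))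
    ((continuous_const.mul (continuous_pow k)).intervalIntegrable _ _)
  rw [intervalIntegral.integral_const_mul, integral_pow] at hle
  simpa [abs_of_nonneg hx, mul_div_assoc] using hle

structure IsRecursiveIntegral (Y g : ℕ → ℝ → ℝ) : Prop where
  zero : ∀ x, Y 0 x = 1
  succ : ∀ m x, Y (m + 1) x = (m + 1) * ∫ s in (0:ℝ)..x, Y m s * g m s

namespace IsRecursiveIntegral

variable {Y g : ℕ → ℝ → ℝ} {a b M : ℝ}

lemma succ_apply_zero (hY : IsRecursiveIntegral Y g) (m : ℕ) : Y (m + 1) 0 = 0 := by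
  rw [hY.succ, intervalIntegral.integral_same, mul_zero]

lemma continuousOn (hY : IsRecursiveIntegral Y g) (hg : ∀ m, ContinuousOn (g m) (Icc a b))
    (h0 : (0:ℝ) ∈ Icc a b) (m : ℕ) : ContinuousOn (Y m) (Icc a b) := by
  induction m with
  | zero => exact continuousOn_const.congr fun x _ => hY.zero x
  | succ m ih =>
    have hint : IntervalIntegrable (fun s => Y m s * g m s) volume a b :=
      (ih.mul (hg m)).intervalIntegrable_of_Icc (h0.1.trans h0.2)
    have hprim := intervalIntegral.continuousOn_primitive_interval' hint
      (uIcc_of_le (h0.1.trans h0.2) ▸ h0)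
    rw [uIcc_of_le (h0.1.trans h0.2)] at hprim
    exact (continuousOn_const.mul hprim).congr fun x _ => hY.succ m x

lemma abs_le (hY : IsRecursiveIntegral Y g) (hg : ∀ m, ∀ x ∈ Icc a b, |g m x| ≤ M)
    (h0 : (0:ℝ) ∈ Icc a b) (m : ℕ) : ∀ x ∈ Icc a b, |Y m x| ≤ (M * |x|) ^ m := by
  induction m with
  | zero => simp [hY.zero]
  | succ m ih =>
    intro x hx
    have hint : |∫ s in (0:ℝ)..x, Y m s * g m s| ≤ M ^ (m + 1) * |x| ^ (m + 1) / (m + 1) := by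
      refine abs_integral_le_mul_abs_pow fun s hs => ?_
      have hs' : s ∈ Icc a b := uIcc_subset_Icc h0 hx hs
      rw [abs_mul, pow_succ]
      calc |Y m s| * |g m s| ≤ (M * |s|) ^ m * M :=
            mul_le_mul (ih s hs') (hg m s hs') (abs_nonneg _) ((abs_nonneg _).trans (ih s hs'))
        _ = M ^ m * M * |s| ^ m := by ring
    rw [hY.succ, abs_mul, mul_pow]
    calc |(m : ℝ) + 1| * |∫ s in (0:ℝ)..x, Y m s * g m s|
        ≤ (m + 1) * (M ^ (m + 1) * |x| ^ (m + 1) / (m + 1)) := by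
          rw [abs_of_pos (by positivity)]; gcongr
      _ = M ^ (m + 1) * |x| ^ (m + 1) := by field_simp

lemma hasDerivAt (hY : IsRecursiveIntegral Y g) (hg : ∀ m, ContinuousOn (g m) (Icc a b))
    (h0 : (0:ℝ) ∈ Icc a b) (m : ℕ) {x : ℝ} (hx : x ∈ Ioo a b) :
    HasDerivAt (Y m) (m * Y (m - 1) x * g (m - 1) x) x := by
  cases m with
  | zero =>
    rw [show Y 0 = fun _ => 1 from funext hY.zero]
    simpa using hasDerivAt_const x (1:ℝ)
  | succ m =>
    have hcont : ContinuousOn (fun s => Y m s * g m s) (Icc a b) :=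
      (hY.continuousOn hg h0 m).mul (hg m)
    have hprim := intervalIntegral.integral_hasDerivAt_right
      (hcont.mono (uIcc_subset_Icc h0 (Ioo_subset_Icc_self hx))).intervalIntegrable
      (hcont.mono Ioo_subset_Icc_self |>.stronglyMeasurableAtFilter isOpen_Ioo x hx)
      (hcont.continuousAt (Icc_mem_nhds hx.1 hx.2))
    refine ((hprim.const_mul ((m : ℝ) + 1)).congr_of_eventuallyEq
      (Eventually.of_forall (hY.succ m))).congr_deriv ?_
    push_cast
    ring

end IsRecursiveIntegral

def parityFamily (X Xt : ℕ → ℝ → ℝ) (n : ℕ) : ℕ → ℝ → ℝ := if Odd n then X else Xt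

lemma parityFamily_add_two (X Xt : ℕ → ℝ → ℝ) (n : ℕ) :
    parityFamily X Xt (n + 2) = parityFamily X Xt n := by
  simp [parityFamily, Nat.odd_add]

lemma isRecursiveIntegral_parityFamily {X Xt : ℕ → ℝ → ℝ} {w : ℝ → ℝ}
    (hX0 : ∀ x, X 0 x = 1) (hXt0 : ∀ x, Xt 0 x = 1)
    (hX : ∀ n : ℕ, 1 ≤ n → ∀ x,
      X n x = n * ∫ s in (0:ℝ)..x, X (n - 1) s * w s ^ ((-1 : ℤ) ^ n))
    (hXt : ∀ n : ℕ, 1 ≤ n → ∀ x,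
      Xt n x = n * ∫ s in (0:ℝ)..x, Xt (n - 1) s * w s ^ ((-1 : ℤ) ^ (n - 1)))
    (n : ℕ) :
    IsRecursiveIntegral (parityFamily X Xt n) fun m s => w s ^ ((-1 : ℤ) ^ (n + m)) := by
  unfold parityFamily
  split_ifs with hn
  · refine ⟨hX0, fun m x => ?_⟩
    have hexp : (-1 : ℤ) ^ (n + m) = (-1) ^ (m + 1) := by
      rw [pow_add, hn.neg_one_pow, pow_succ, mul_comm]
    rw [hexp, hX (m + 1) (by omega) x]
    simp
  · refine ⟨hXt0, fun m x => ?_⟩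
    have hexp : (-1 : ℤ) ^ (n + m) = (-1) ^ m := by
      rw [pow_add, (Nat.not_odd_iff_even.mp hn).neg_one_pow, one_mul]
    rw [hexp, hXt (m + 1) (by omega) x]
    simp

def formalPower (f₀ : ℝ → ℝ) (Y : ℕ → ℕ → ℝ → ℝ) (n : ℕ) (x : ℝ) : ℝ := f₀ x * Y n n x

noncomputable def formalPowerDeriv (f₀ : ℝ → ℝ) (Y : ℕ → ℕ → ℝ → ℝ) (n : ℕ) (x : ℝ) : ℝ :=
  deriv f₀ x * Y n n x + f₀ x * ((f₀ x ^ 2)⁻¹ * (n * Y n (n - 1) x))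

noncomputable def formalPowerDeriv2 (f₀ : ℝ → ℝ) (Y : ℕ → ℕ → ℝ → ℝ) (n : ℕ) (x : ℝ) : ℝ :=
  deriv (deriv f₀) x * Y n n x + f₀ x * (n * ((n - 1 : ℕ) * Y n (n - 2) x))

section FormalPower

variable {f₀ : ℝ → ℝ} {Y : ℕ → ℕ → ℝ → ℝ} {a b : ℝ}

lemma formalPower_apply_zero {g : ℕ → ℕ → ℝ → ℝ} (hY : ∀ n, IsRecursiveIntegral (Y n) (g n))
    (hf0 : f₀ 0 = 1) (n : ℕ) : formalPower f₀ Y n 0 = if n = 0 then 1 else 0 := by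
  cases n with
  | zero => simp [formalPower, hf0, (hY 0).zero]
  | succ n => simp [formalPower, (hY _).succ_apply_zero]

lemma formalPowerDeriv_apply_zero {g : ℕ → ℕ → ℝ → ℝ}
    (hY : ∀ n, IsRecursiveIntegral (Y n) (g n)) (hf0 : f₀ 0 = 1) (hf'0 : deriv f₀ 0 = 0)
    (n : ℕ) : formalPowerDeriv f₀ Y n 0 = if n = 1 then 1 else 0 := by
  rcases n with _ | _ | n
  · simp [formalPowerDeriv, hf'0]
  · simp [formalPowerDeriv, hf'0, hf0, (hY 1).zero]
  · simp [formalPowerDeriv, hf'0, (hY _).succ_apply_zero]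

lemma formalPowerDeriv2_eq {q : ℝ → ℝ} {x : ℝ} (hode : deriv (deriv f₀) x = q x * f₀ x)
    (hY : ∀ n, Y (n + 2) = Y n) (n : ℕ) :
    formalPowerDeriv2 f₀ Y n x
      = q x * formalPower f₀ Y n x + n * (n - 1 : ℕ) * formalPower f₀ Y (n - 2) x := by
  rcases n with _ | _ | n
  · simp [formalPowerDeriv2, formalPower, hode]; ring
  · simp [formalPowerDeriv2, formalPower, hode]; ring
  · rw [show n + 1 + 1 = n + 2 from rfl]
    simp only [formalPowerDeriv2, formalPower, hode, Nat.add_sub_cancel, hY]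
    ring

lemma continuousOn_sq_zpow (hf : Continuous f₀) (hne : ∀ x ∈ Icc a b, f₀ x ≠ 0) (k : ℤ) :
    ContinuousOn (fun s => (f₀ s ^ 2) ^ k) (Icc a b) :=
  (hf.pow 2).continuousOn.zpow₀ k fun x hx => Or.inl (pow_ne_zero 2 (hne x hx))

lemma hasDerivAt_diag_of_isRecursiveIntegral (hf : Continuous f₀) (hne : ∀ x ∈ Icc a b, f₀ x ≠ 0)
    (hY : ∀ n, IsRecursiveIntegral (Y n) fun m s => (f₀ s ^ 2) ^ ((-1 : ℤ) ^ (n + m)))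
    (h0 : (0:ℝ) ∈ Icc a b) (n : ℕ) {x : ℝ} (hx : x ∈ Ioo a b) :
    HasDerivAt (Y n n) ((f₀ x ^ 2)⁻¹ * (n * Y n (n - 1) x)) x := by
  refine ((hY n).hasDerivAt (fun m => continuousOn_sq_zpow hf hne _) h0 n hx).congr_deriv ?_
  rcases n with _ | m
  · simp
  · have hexp : (-1 : ℤ) ^ (m + 1 + (m + 1 - 1)) = -1 := Odd.neg_one_pow ⟨m, by omega⟩
    rw [hexp, zpow_neg_one]
    ring

lemma hasDerivAt_subdiag_of_isRecursiveIntegral (hf : Continuous f₀) (hne : ∀ x ∈ Icc a b, f₀ x ≠ 0)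
    (hY : ∀ n, IsRecursiveIntegral (Y n) fun m s => (f₀ s ^ 2) ^ ((-1 : ℤ) ^ (n + m)))
    (h0 : (0:ℝ) ∈ Icc a b) (n : ℕ) {x : ℝ} (hx : x ∈ Ioo a b) :
    HasDerivAt (Y n (n - 1)) (f₀ x ^ 2 * ((n - 1 : ℕ) * Y n (n - 2) x)) x := by
  refine ((hY n).hasDerivAt (fun m => continuousOn_sq_zpow hf hne _) h0 (n - 1) hx).congr_deriv ?_
  rcases n with _ | _ | m
  · simp
  · simp
  · have hexp : (-1 : ℤ) ^ (m + 2 + (m + 2 - 1 - 1)) = 1 := Even.neg_one_pow ⟨m + 1, by omega⟩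
    rw [hexp, zpow_one, Nat.sub_sub]
    ring

lemma hasDerivAt_formalPower_s8 (hf : ContDiff ℝ 2 f₀) (hne : ∀ x ∈ Icc a b, f₀ x ≠ 0)
    (hY : ∀ n, IsRecursiveIntegral (Y n) fun m s => (f₀ s ^ 2) ^ ((-1 : ℤ) ^ (n + m)))
    (h0 : (0:ℝ) ∈ Icc a b) (n : ℕ) {x : ℝ} (hx : x ∈ Ioo a b) :
    HasDerivAt (formalPower f₀ Y n) (formalPowerDeriv f₀ Y n x) x :=
  ((hf.differentiable (by norm_num) x).hasDerivAt.mul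
    (hasDerivAt_diag_of_isRecursiveIntegral hf.continuous hne hY h0 n hx) :)

lemma hasDerivAt_formalPowerDeriv (hf : ContDiff ℝ 2 f₀) (hne : ∀ x ∈ Icc a b, f₀ x ≠ 0)
    (hY : ∀ n, IsRecursiveIntegral (Y n) fun m s => (f₀ s ^ 2) ^ ((-1 : ℤ) ^ (n + m)))
    (h0 : (0:ℝ) ∈ Icc a b) (n : ℕ) {x : ℝ} (hx : x ∈ Ioo a b) :
    HasDerivAt (formalPowerDeriv f₀ Y n) (formalPowerDeriv2 f₀ Y n x) x := by
  have hfx : f₀ x ≠ 0 := hne x (Ioo_subset_Icc_self hx)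
  have hd : HasDerivAt f₀ (deriv f₀ x) x := (hf.differentiable (by norm_num) x).hasDerivAt
  have hd' : HasDerivAt (deriv f₀) (deriv (deriv f₀) x) x :=
    ((hf.deriv' (n := 1)).differentiable one_ne_zero x).hasDerivAt
  have hw := (hd.pow 2).inv (pow_ne_zero 2 hfx)
  have hP := hasDerivAt_diag_of_isRecursiveIntegral hf.continuous hne hY h0 n hx
  have hR := hasDerivAt_subdiag_of_isRecursiveIntegral hf.continuous hne hY h0 n hx
  refine ((hd'.mul hP).add (hd.mul (hw.mul (hR.const_mul (n : ℝ))))).congr_deriv ?_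
  -- the two terms `± 2 n f₀' Y n (n - 1) / f₀ ^ 2` cancel
  simp only [formalPowerDeriv2, Pi.mul_apply, Pi.inv_apply, Pi.pow_apply]
  field_simp
  ring

lemma exists_abs_sq_zpow_neg_one_pow_le (hf : Continuous f₀) (hne : ∀ x ∈ Icc a b, f₀ x ≠ 0) :
    ∃ M, ∀ k : ℕ, ∀ x ∈ Icc a b, |(f₀ x ^ 2) ^ ((-1 : ℤ) ^ k)| ≤ M := by
  obtain ⟨M₁, hM₁⟩ := isCompact_Icc.exists_bound_of_continuousOn (continuousOn_sq_zpow hf hne 1)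
  obtain ⟨M₂, hM₂⟩ := isCompact_Icc.exists_bound_of_continuousOn (continuousOn_sq_zpow hf hne (-1))
  refine ⟨max M₁ M₂, fun k x hx => ?_⟩
  rcases neg_one_pow_eq_or ℤ k with h | h <;> rw [h]
  · exact (hM₁ x hx).trans (le_max_left _ _)
  · exact (hM₂ x hx).trans (le_max_right _ _)

lemma geomBoundedOn_formalPower (hf : ContDiff ℝ 2 f₀) (hne : ∀ x ∈ Icc a b, f₀ x ≠ 0)
    (hY : ∀ n, IsRecursiveIntegral (Y n) fun m s => (f₀ s ^ 2) ^ ((-1 : ℤ) ^ (n + m)))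
    (h0 : (0:ℝ) ∈ Icc a b) :
    GeomBoundedOn (formalPower f₀ Y) (Icc a b) ∧ GeomBoundedOn (formalPowerDeriv f₀ Y) (Icc a b) ∧
      GeomBoundedOn (formalPowerDeriv2 f₀ Y) (Icc a b) := by
  obtain ⟨M, hM⟩ := exists_abs_sq_zpow_neg_one_pow_le hf.continuous hne
  have hM0 : 0 ≤ M := (abs_nonneg _).trans (hM 0 0 h0)
  have hY' (k : ℕ) : GeomBoundedOn (fun n x => Y n (n - k) x) (Icc a b) :=
    .of_le_pow_sub (K := M * max |a| |b|) k fun n x hx =>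
      ((hY n).abs_le (fun m => hM (n + m)) h0 (n - k) x hx).trans
        (pow_le_pow_left₀ (by positivity)
          (mul_le_mul_of_nonneg_left (abs_le_max_abs_abs hx.1 hx.2) hM0) _)
  have hcont {g : ℝ → ℝ} (hg : Continuous g) : GeomBoundedOn (fun _ x => g x) (Icc a b) :=
    .of_continuousOn isCompact_Icc hg.continuousOn
  have hf' := hcont hf.continuous
  refine ⟨hf'.mul (hY' 0), ?_, ?_⟩
  · exact ((hcont (hf.continuous_deriv (by norm_num))).mul (hY' 0)).add (hf'.mul
      ((GeomBoundedOn.of_continuousOn isCompact_Icc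
        ((continuousOn_sq_zpow hf.continuous hne (-1)).congr fun x _ => (zpow_neg_one _).symm)).mul
        ((GeomBoundedOn.natCast_sub _ 0).mul (hY' 1))))
  · exact ((hcont ((hf.deriv' (n := 1)).continuous_deriv le_rfl)).mul (hY' 0)).add
      (hf'.mul ((GeomBoundedOn.natCast_sub _ 0).mul
        ((GeomBoundedOn.natCast_sub _ 1).mul (hY' 2))))

end FormalPower

lemma exists_Icc_forall_ne_zero {f : ℝ → ℝ} (hf : Continuous f) {p q : ℝ} (hpq : p ≤ q)
    (h : ∀ x ∈ Icc p q, f x ≠ 0) : ∃ a b, a < p ∧ q < b ∧ ∀ x ∈ Icc a b, f x ≠ 0 := by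
  obtain ⟨δ, hδ, hsub⟩ :=
    isCompact_Icc.exists_cthickening_subset_open (isOpen_ne_fun hf continuous_const) h
  refine ⟨p - δ, q + δ, by linarith, by linarith, fun x hx => hsub ?_⟩
  rcases lt_or_ge x p with hxp | hpx
  · refine Metric.closedBall_subset_cthickening (left_mem_Icc.2 hpq) δ ?_
    rw [Real.closedBall_eq_Icc]
    exact ⟨hx.1, by linarith⟩
  rcases le_or_gt x q with hxq | hqx
  · exact Metric.self_subset_cthickening _ ⟨hpx, hxq⟩
  · refine Metric.closedBall_subset_cthickening (right_mem_Icc.2 hpq) δ ?_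
    rw [Real.closedBall_eq_Icc]
    exact ⟨by linarith, hx.2⟩

theorem SPPS_representation_general (d : ℝ) (q f₀ : ℝ → ℝ)
    (hf₀C2 : ContDiff ℝ 2 f₀)
    (hode : ∀ x ∈ Icc 0 d, deriv (deriv f₀) x = q x * f₀ x)
    (hf₀0 : f₀ 0 = 1) (hf₀'0 : deriv f₀ 0 = 0)
    (hf₀ne : ∀ x ∈ Icc 0 d, f₀ x ≠ 0)
    (X Xt : ℕ → ℝ → ℝ)
    (hX0 : ∀ x, X 0 x = 1)
    (hXt0 : ∀ x, Xt 0 x = 1)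
    (hX : ∀ n : ℕ, 1 ≤ n → ∀ x,
      X n x = n * ∫ s in (0:ℝ)..x, X (n - 1) s * (f₀ s ^ 2) ^ ((-1 : ℤ) ^ n))
    (hXt : ∀ n : ℕ, 1 ≤ n → ∀ x,
      Xt n x = n * ∫ s in (0:ℝ)..x, Xt (n - 1) s * (f₀ s ^ 2) ^ ((-1 : ℤ) ^ (n - 1)))
    (φ : ℕ → ℝ → ℝ)
    (hφ : ∀ k x, φ k x = if Odd k then f₀ x * X k x else f₀ x * Xt k x)
    (ω : ℂ) (u : ℝ → ℂ)
    (hu : ∀ x, u x = ∑' n : ℕ, (-(Complex.I * ω)) ^ n * (φ n x : ℂ) / (Nat.factorial n)) :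
    TendstoUniformlyOn
      (fun N x => ∑ n ∈ Finset.range N,
        (-(Complex.I * ω)) ^ n * (φ n x : ℂ) / (Nat.factorial n))
      u atTop (Icc 0 d) ∧
    (∀ x ∈ Icc 0 d, -deriv (deriv u) x + q x * u x = ω ^ 2 * u x) ∧
    u 0 = 1 ∧ deriv u 0 = -(Complex.I * ω) := by
  obtain ⟨a, b, ha, hb, hne⟩ := exists_Icc_forall_ne_zero hf₀C2.continuous (le_max_right d 0)
    fun x hx => by
      rcases le_max_iff.mp hx.2 with h | h
      · exact hf₀ne x ⟨hx.1, h⟩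
      · rw [le_antisymm h hx.1, hf₀0]; exact one_ne_zero
  have h0 : (0:ℝ) ∈ Ioo a b := ⟨ha, (le_max_right d 0).trans_lt hb⟩
  have hsub : Icc 0 d ⊆ Ioo a b := fun x hx =>
    ⟨ha.trans_le hx.1, hx.2.trans_lt ((le_max_left d 0).trans_lt hb)⟩
  set Y := parityFamily X Xt
  set c := -(Complex.I * ω)
  have hY := isRecursiveIntegral_parityFamily hX0 hXt0 hX hXt
  obtain rfl : φ = formalPower f₀ Y := by
    ext n x; simp only [hφ, formalPower, Y, parityFamily]; split_ifs <;> rfl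
  obtain rfl : u = fun x => ∑' n, egfTerm c (formalPower f₀ Y) n x := funext hu
  have hUK : Ioo a b ⊆ Icc a b := Ioo_subset_Icc_self
  obtain ⟨hφ₀, hφ₁, hφ₂⟩ := geomBoundedOn_formalPower hf₀C2 hne hY (hUK h0)
  have hd₁ := hasDerivAt_formalPower_s8 hf₀C2 hne hY (hUK h0)
  have hd₂ := hasDerivAt_formalPowerDeriv hf₀C2 hne hY (hUK h0)
  refine ⟨(hφ₀.mono (hsub.trans hUK)).tendstoUniformlyOn_tsum_egfTerm c, fun x hx => ?_,
    (tsum_egfTerm_of_eq_ite c 0 (formalPower_apply_zero hY hf₀0)).trans (by simp), ?_⟩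
  · rw [deriv_deriv_tsum_egfTerm isOpen_Ioo isPreconnected_Ioo hd₁ hd₂ (hφ₀.mono hUK)
        (hφ₁.mono hUK) (hφ₂.mono hUK) c (hsub hx),
      tsum_egfTerm_of_eq_add_shift c (formalPowerDeriv2_eq (hode x hx) (parityFamily_add_two X Xt))
        (hφ₀.summable_egfTerm c (hUK (hsub hx)))]
    linear_combination (-ω ^ 2 * ∑' n, egfTerm c (formalPower f₀ Y) n x) * Complex.I_sq
  · rw [((hφ₀.mono hUK).hasDerivAt_tsum_egfTerm isOpen_Ioo isPreconnected_Ioo hd₁ (hφ₁.mono hUK)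
        c h0).deriv, tsum_egfTerm_of_eq_ite c 1 (formalPowerDeriv_apply_zero hY hf₀0 hf₀'0)]
    simp

theorem SPPS_representation (d : ℝ) (q f₀ : ℝ → ℝ)
    (hq : ContinuousOn q (Icc 0 d))
    (hf₀C2 : ContDiff ℝ 2 f₀)
    (hode : ∀ x ∈ Icc 0 d, deriv (deriv f₀) x = q x * f₀ x)
    (hf₀0 : f₀ 0 = 1) (hf₀'0 : deriv f₀ 0 = 0)
    (hf₀ne : ∀ x ∈ Icc 0 d, f₀ x ≠ 0)
    (X Xt : ℕ → ℝ → ℝ)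
    (hX0 : ∀ x, X 0 x = 1)
    (hXt0 : ∀ x, Xt 0 x = 1)
    (hX : ∀ n : ℕ, 1 ≤ n → ∀ x,
      X n x = n * ∫ s in (0:ℝ)..x, X (n - 1) s * (f₀ s ^ 2) ^ ((-1 : ℤ) ^ n))
    (hXt : ∀ n : ℕ, 1 ≤ n → ∀ x,
      Xt n x = n * ∫ s in (0:ℝ)..x, Xt (n - 1) s * (f₀ s ^ 2) ^ ((-1 : ℤ) ^ (n - 1)))
    (φ : ℕ → ℝ → ℝ)
    (hφ : ∀ k x, φ k x = if Odd k then f₀ x * X k x else f₀ x * Xt k x)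
    (ω : ℂ) (u : ℝ → ℂ)
    (hu : ∀ x, u x = ∑' n : ℕ, (-(Complex.I * ω)) ^ n * (φ n x : ℂ) / (Nat.factorial n)) :
    TendstoUniformlyOn
      (fun N x => ∑ n ∈ Finset.range N,
        (-(Complex.I * ω)) ^ n * (φ n x : ℂ) / (Nat.factorial n))
      u atTop (Icc 0 d) ∧
    (∀ x ∈ Icc 0 d, -deriv (deriv u) x + q x * u x = ω ^ 2 * u x) ∧
    u 0 = 1 ∧ deriv u 0 = -(Complex.I * ω) :=
  SPPS_representation_general d q f₀ hf₀C2 hode hf₀0 hf₀'0 hf₀ne X Xt hX0 hXt0 hX hXt φ hφ ω u hu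
end

section
/- Let q be continuous on [0,d], and let φ_n denote the formal powers associated with a nonvanishing solution f₀ of f''=qf with f₀(0)=1, f₀'(0)=0. Then there exists a constant c (depending on f₀ and d) such that |φ_n(x)| ≤ c·max(1, f₀(x)·max_{[0,x]}|1/f₀|)·x^n for all x ∈ [0,d] and all n ≥ 0; in particular the SPPS series Σ (-iω)^n φ_n(x)/n! converges absolutely and uniformly on [0,d]×K for any compact K ⊂ ℂ. -/
/-!
With `G = f₀²`, the recursions for `X` and `X̃` integrate alternately against `G` and `1 / G`.
As `f₀` is `C¹` and nonvanishing on `[0, d]`, `|G'| ≤ M G` there, so both `e^{Mx} G(x)` and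
`e^{Mx} / G(x)` are nondecreasing. By induction `|X⁽ⁿ⁾(x)| ≤ e^{Mx} G(x)^{0 or 1} xⁿ`: integrating
`sⁿ` gains exactly `x^{n+1} / (n+1)`, and monotonicity moves the weight from `s` to `x` at no cost.
Hence `|φₙ(x)| ≤ c xⁿ` with `c` independent of `n`, which implies the stated bound because the
factor `max 1 (…)` is at least `1`; the Weierstrass M-test with majorant `c (R d)ⁿ / n!` then gives
the convergence of the series.
-/

open MeasureTheory Set Filter Topology

section

open Real

theorem monotoneOn_exp_mul_of_hasDerivAt {s : Set ℝ} (hs : Convex ℝ s) {g g' : ℝ → ℝ} {M : ℝ}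
    (hg : ∀ x ∈ s, HasDerivAt g (g' x) x) (hM : ∀ x ∈ s, -(M * g x) ≤ g' x) :
    MonotoneOn (fun x => exp (M * x) * g x) s := by
  have hderiv : ∀ x ∈ s, HasDerivAt (fun x => exp (M * x) * g x)
      (exp (M * x) * M * g x + exp (M * x) * g' x) x := fun x hx =>
    (((hasDerivAt_id x).const_mul M).exp.congr_deriv (by simp)).mul (hg x hx)
  refine monotoneOn_of_hasDerivWithinAt_nonneg hs
    (fun x hx => (hderiv x hx).continuousAt.continuousWithinAt)
    (fun x hx => (hderiv x (interior_subset hx)).hasDerivWithinAt) fun x hx => ?_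
  have hMx := hM x (interior_subset hx)
  calc 0 ≤ exp (M * x) * (M * g x + g' x) := mul_nonneg (exp_pos _).le (by linarith)
    _ = exp (M * x) * M * g x + exp (M * x) * g' x := by ring

theorem monotoneOn_exp_mul_zpow {s : Set ℝ} (hs : Convex ℝ s) {g g' : ℝ → ℝ} {M : ℝ} (k : ℤ)
    (hpos : ∀ x ∈ s, 0 < g x) (hg : ∀ x ∈ s, HasDerivAt g (g' x) x)
    (hM : ∀ x ∈ s, |k * g' x| ≤ M * g x) :
    MonotoneOn (fun x => exp (M * x) * g x ^ k) s := by
  refine monotoneOn_exp_mul_of_hasDerivAt hs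
    (fun x hx => (hasDerivAt_zpow k (g x) (.inl (hpos x hx).ne')).comp x (hg x hx)) fun x hx => ?_
  have hpow : g x ^ k = g x ^ (k - 1) * g x := by
    rw [← zpow_add_one₀ (hpos x hx).ne', sub_add_cancel]
  have hkg : -(M * g x) ≤ k * g' x := (neg_le_neg (hM x hx)).trans (neg_abs_le _)
  have := (zpow_pos (hpos x hx) (k - 1)).le
  calc -(M * g x ^ k) = g x ^ (k - 1) * -(M * g x) := by rw [hpow]; ring
    _ ≤ g x ^ (k - 1) * (k * g' x) := by gcongr
    _ = k * g x ^ (k - 1) * g' x := by ring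

theorem IsCompact.exists_monotoneOn_exp_mul_sq_zpow {s : Set ℝ} (hs : IsCompact s)
    (hconv : Convex ℝ s) {f : ℝ → ℝ} (hf : ContDiff ℝ 1 f) (hne : ∀ x ∈ s, f x ≠ 0) :
    ∃ M, 0 ≤ M ∧ ∀ k : ℤ, |k| ≤ 1 → MonotoneOn (fun x => exp (M * x) * (f x ^ 2) ^ k) s := by
  obtain ⟨C, hC⟩ := hs.exists_bound_of_continuousOn
    ((hf.continuous_deriv le_rfl).continuousOn.div hf.continuous.continuousOn hne)
  refine ⟨2 * max C 0, by positivity, fun k hk => monotoneOn_exp_mul_zpow hconv k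
    (g' := fun x => 2 * f x * deriv f x) (fun x hx => by positivity [hne x hx])
    (fun x _ => ?_) fun x hx => ?_⟩
  · simpa using (hf.differentiable one_ne_zero x).hasDerivAt.fun_pow 2
  · have hfx : |deriv f x| ≤ max C 0 * |f x| := by
      have := (hC x hx).trans (le_max_left C 0)
      rwa [Pi.div_apply, Real.norm_eq_abs, abs_div, div_le_iff₀ (abs_pos.mpr (hne x hx))] at this
    calc |k * (2 * f x * deriv f x)| = |(k : ℝ)| * (2 * |f x| * |deriv f x|) := by
          simp [abs_mul]
      _ ≤ 1 * (2 * |f x| * (max C 0 * |f x|)) := by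
          gcongr
          exact_mod_cast hk
      _ = 2 * max C 0 * f x ^ 2 := by rw [← sq_abs (f x)]; ring

theorem abs_succ_mul_integral_le_of_abs_le_mul_pow {g : ℝ → ℝ} {B x : ℝ} (n : ℕ) (hx : 0 ≤ x)
    (hg : ∀ s ∈ Ioc 0 x, |g s| ≤ B * s ^ n) :
    |((n : ℝ) + 1) * ∫ s in 0..x, g s| ≤ B * x ^ (n + 1) := by
  have hint := intervalIntegral.norm_integral_le_of_norm_le (μ := volume) (f := g)
    (g := fun s => B * s ^ n) hx (ae_of_all _ hg) (by apply Continuous.intervalIntegrable; fun_prop)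
  rw [Real.norm_eq_abs, intervalIntegral.integral_const_mul, integral_pow] at hint
  rw [abs_mul, abs_of_pos (by positivity)]
  calc ((n : ℝ) + 1) * |∫ s in 0..x, g s|
      ≤ ((n : ℝ) + 1) * (B * ((x ^ (n + 1) - 0 ^ (n + 1)) / (n + 1))) := by gcongr
    _ = B * x ^ (n + 1) := by field_simp; ring

theorem abs_le_of_alternating_recursion {d : ℝ} {E G : ℝ → ℝ} {Y : ℕ → ℝ → ℝ}
    (hE : MonotoneOn E (Icc 0 d)) (hEG : MonotoneOn (fun x => E x * G x) (Icc 0 d))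
    (hE1 : ∀ x ∈ Icc 0 d, 1 ≤ E x) (hG : ∀ x ∈ Icc 0 d, 0 < G x) (hY0 : ∀ x, Y 0 x = 1)
    (hY : ∀ n x, Y (n + 1) x = ((n : ℝ) + 1) * ∫ s in 0..x, Y n s * G s ^ ((-1 : ℤ) ^ n))
    (n : ℕ) {x : ℝ} (hx : x ∈ Icc 0 d) : |Y n x| ≤ E x * G x ^ (n % 2) * x ^ n := by
  induction n generalizing x with
  | zero => simpa [hY0] using hE1 x hx
  | succ n ih =>
    rw [hY]
    refine abs_succ_mul_integral_le_of_abs_le_mul_pow n hx.1 fun s hs => ?_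
    have hs' : s ∈ Icc 0 d := ⟨hs.1.le, hs.2.trans hx.2⟩
    have hGs := hG s hs'
    have hweight : E s * G s ^ (n % 2) * G s ^ ((-1 : ℤ) ^ n) ≤ E x * G x ^ ((n + 1) % 2) := by
      rcases Nat.even_or_odd n with hn | hn
      · rw [Nat.even_iff.mp hn, Nat.succ_mod_two_eq_one_iff.mpr (Nat.even_iff.mp hn),
          hn.neg_one_pow]
        simpa using hEG hs' hx hs.2
      · rw [Nat.odd_iff.mp hn, Nat.succ_mod_two_eq_zero_iff.mpr (Nat.odd_iff.mp hn),
          hn.neg_one_pow]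
        simpa [hGs.ne'] using hE hs' hx hs.2
    calc |Y n s * G s ^ (-1 : ℤ) ^ n| = |Y n s| * G s ^ (-1 : ℤ) ^ n := by
          rw [abs_mul, abs_of_pos (zpow_pos hGs _)]
      _ ≤ E s * G s ^ (n % 2) * s ^ n * G s ^ (-1 : ℤ) ^ n := by gcongr; exact ih hs'
      _ = E s * G s ^ (n % 2) * G s ^ ((-1 : ℤ) ^ n) * s ^ n := by ring
      _ ≤ E x * G x ^ ((n + 1) % 2) * s ^ n := by gcongr; exact pow_nonneg hs.1.le n

theorem exists_abs_le_mul_pow_of_alternating_recursion {d M : ℝ} {G : ℝ → ℝ}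
    {Y : ℕ → ℝ → ℝ} (hM : 0 ≤ M) (hG : ∀ x ∈ Icc 0 d, 0 < G x)
    (hEG : MonotoneOn (fun x => exp (M * x) * G x) (Icc 0 d)) (hY0 : ∀ x, Y 0 x = 1)
    (hY : ∀ n x, Y (n + 1) x = ((n : ℝ) + 1) * ∫ s in 0..x, Y n s * G s ^ ((-1 : ℤ) ^ n)) :
    ∃ A, ∀ x ∈ Icc 0 d, ∀ n, |Y n x| ≤ A * x ^ n := by
  have hE : MonotoneOn (fun x => exp (M * x)) (Icc 0 d) := fun a _ b _ hab => by
    dsimp only; gcongr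
  refine ⟨max (exp (M * d)) (exp (M * d) * G d), fun x hx n => ?_⟩
  have hd : d ∈ Icc 0 d := ⟨hx.1.trans hx.2, le_rfl⟩
  refine (abs_le_of_alternating_recursion hE hEG (fun x hx => one_le_exp (mul_nonneg hM hx.1))
    hG hY0 hY n hx).trans ?_
  have := pow_nonneg hx.1 n
  gcongr
  rcases Nat.mod_two_eq_zero_or_one n with h | h <;> rw [h]
  · simpa using le_max_of_le_left (hE hx hd hx.2)
  · simpa using le_max_of_le_right (hEG hx hd hx.2)

theorem summable_and_tendstoUniformlyOn_exp_series {a : ℕ → ℝ → ℝ} {d B : ℝ} {K : Set ℂ}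
    (hK : Bornology.IsBounded K) (ha : ∀ x ∈ Icc 0 d, ∀ n, |a n x| ≤ B * x ^ n) :
    (∀ x ∈ Icc 0 d, ∀ ω ∈ K,
      Summable fun n => ‖(-(Complex.I * ω)) ^ n * (a n x : ℂ) / (Nat.factorial n)‖) ∧
    TendstoUniformlyOn
      (fun N (p : ℝ × ℂ) => ∑ n ∈ Finset.range N,
        (-(Complex.I * p.2)) ^ n * (a n p.1 : ℂ) / (Nat.factorial n))
      (fun p => ∑' n, (-(Complex.I * p.2)) ^ n * (a n p.1 : ℂ) / (Nat.factorial n))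
      atTop (Icc 0 d ×ˢ K) := by
  obtain ⟨R, hR0, hR⟩ := hK.exists_pos_norm_le
  have hbound : ∀ n, ∀ p ∈ Icc 0 d ×ˢ K,
      ‖(-(Complex.I * p.2)) ^ n * (a n p.1 : ℂ) / (Nat.factorial n)‖ ≤
        B * (R * d) ^ n / (Nat.factorial n) := by
    rintro n ⟨x, ω⟩ ⟨hx, hω⟩
    dsimp only
    have hB : 0 ≤ B := by simpa using (abs_nonneg _).trans (ha x hx 0)
    rw [norm_div, norm_mul, norm_pow, norm_neg, norm_mul, Complex.norm_I, one_mul,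
      Complex.norm_real, Real.norm_eq_abs, Complex.norm_natCast]
    gcongr ?_ / _
    calc ‖ω‖ ^ n * |a n x| ≤ R ^ n * (B * d ^ n) := by
          gcongr
          · exact hR ω hω
          · exact (ha x hx n).trans (by gcongr; exacts [hx.1, hx.2])
      _ = B * (R * d) ^ n := by ring
  have hu : Summable fun n => B * (R * d) ^ n / (Nat.factorial n) := by
    simpa only [mul_div_assoc] using (Real.summable_pow_div_factorial (R * d)).mul_left B
  exact ⟨fun x hx ω hω => hu.of_nonneg_of_le (fun n => norm_nonneg _)
    fun n => hbound n (x, ω) ⟨hx, hω⟩, tendstoUniformlyOn_tsum_nat hu hbound⟩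

end

theorem formal_powers_bound_and_convergence_general (d : ℝ) (f₀ : ℝ → ℝ)
    (hf₀C2 : ContDiff ℝ 2 f₀)
    (hf₀ne : ∀ x ∈ Icc 0 d, f₀ x ≠ 0)
    (X Xt : ℕ → ℝ → ℝ)
    (hX0 : ∀ x, X 0 x = 1)
    (hXt0 : ∀ x, Xt 0 x = 1)
    (hX : ∀ n : ℕ, 1 ≤ n → ∀ x,
      X n x = n * ∫ s in (0:ℝ)..x, X (n - 1) s * (f₀ s ^ 2) ^ ((-1 : ℤ) ^ n))
    (hXt : ∀ n : ℕ, 1 ≤ n → ∀ x,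
      Xt n x = n * ∫ s in (0:ℝ)..x, Xt (n - 1) s * (f₀ s ^ 2) ^ ((-1 : ℤ) ^ (n - 1)))
    (φ : ℕ → ℝ → ℝ)
    (hφ : ∀ k x, φ k x = if Odd k then f₀ x * X k x else f₀ x * Xt k x) :
    ∃ c : ℝ,
      (∀ x ∈ Icc 0 d, ∀ n : ℕ,
        |φ n x| ≤ c * max 1 (f₀ x * sSup ((fun s => |1 / f₀ s|) '' Icc 0 x)) * x ^ n) ∧
      (∀ K : Set ℂ, IsCompact K →
        (∀ x ∈ Icc 0 d, ∀ ω ∈ K,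
          Summable fun n : ℕ =>
            ‖(-(Complex.I * ω)) ^ n * (φ n x : ℂ) / (Nat.factorial n)‖) ∧
        TendstoUniformlyOn
          (fun N (p : ℝ × ℂ) => ∑ n ∈ Finset.range N,
            (-(Complex.I * p.2)) ^ n * (φ n p.1 : ℂ) / (Nat.factorial n))
          (fun p => ∑' n : ℕ,
            (-(Complex.I * p.2)) ^ n * (φ n p.1 : ℂ) / (Nat.factorial n))
          atTop (Icc 0 d ×ˢ K)) := by
  obtain ⟨M, hM, hmono⟩ := isCompact_Icc.exists_monotoneOn_exp_mul_sq_zpow (convex_Icc 0 d)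
    (hf₀C2.of_le one_le_two) hf₀ne
  have hsq : ∀ x ∈ Icc 0 d, 0 < f₀ x ^ 2 := fun x hx => by positivity [hf₀ne x hx]
  obtain ⟨A, hA⟩ := exists_abs_le_mul_pow_of_alternating_recursion hM hsq
    (by simpa using hmono 1 le_rfl) hXt0 fun n x => by simpa using hXt (n + 1) n.succ_pos x
  obtain ⟨A', hA'⟩ := exists_abs_le_mul_pow_of_alternating_recursion hM
    (fun x hx => inv_pos.mpr (hsq x hx)) (by simpa using hmono (-1) (by simp)) hX0
    fun n x => by
      rw [hX (n + 1) n.succ_pos x, pow_succ (-1 : ℤ) n, mul_neg_one]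
      simp only [inv_zpow', Nat.add_sub_cancel, Nat.cast_add_one]
  obtain ⟨F, hF⟩ := isCompact_Icc.exists_bound_of_continuousOn (s := Icc 0 d)
    hf₀C2.continuous.continuousOn
  have hφ_le : ∀ x ∈ Icc 0 d, ∀ n, |φ n x| ≤ F * max A A' * x ^ n := by
    intro x hx n
    have hpow := pow_nonneg hx.1 n
    have hf₀_mul : ∀ y, |y| ≤ max A A' * x ^ n → |f₀ x * y| ≤ F * (max A A' * x ^ n) :=
      fun y hy => by
        rw [abs_mul]
        exact mul_le_mul (hF x hx) hy (abs_nonneg y) ((abs_nonneg _).trans (hF x hx))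
    rw [hφ, mul_assoc]
    split_ifs
    · exact hf₀_mul _ ((hA' x hx n).trans (mul_le_mul_of_nonneg_right (le_max_right A A') hpow))
    · exact hf₀_mul _ ((hA x hx n).trans (mul_le_mul_of_nonneg_right (le_max_left A A') hpow))
  refine ⟨F * max A A', fun x hx n => (hφ_le x hx n).trans ?_, fun K hK =>
    summable_and_tendstoUniformlyOn_exp_series hK.isBounded hφ_le⟩
  have hB : 0 ≤ F * max A A' := (abs_nonneg _).trans (by simpa using hφ_le x hx 0)
  exact mul_le_mul_of_nonneg_right (le_mul_of_one_le_right hB (le_max_left _ _))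
    (pow_nonneg hx.1 n)

theorem formal_powers_bound_and_convergence (d : ℝ) (q f₀ : ℝ → ℝ)
    (hq : ContinuousOn q (Icc 0 d))
    (hf₀C2 : ContDiff ℝ 2 f₀)
    (hode : ∀ x ∈ Icc 0 d, deriv (deriv f₀) x = q x * f₀ x)
    (hf₀0 : f₀ 0 = 1) (hf₀'0 : deriv f₀ 0 = 0)
    (hf₀ne : ∀ x ∈ Icc 0 d, f₀ x ≠ 0)
    (X Xt : ℕ → ℝ → ℝ)
    (hX0 : ∀ x, X 0 x = 1)
    (hXt0 : ∀ x, Xt 0 x = 1)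
    (hX : ∀ n : ℕ, 1 ≤ n → ∀ x,
      X n x = n * ∫ s in (0:ℝ)..x, X (n - 1) s * (f₀ s ^ 2) ^ ((-1 : ℤ) ^ n))
    (hXt : ∀ n : ℕ, 1 ≤ n → ∀ x,
      Xt n x = n * ∫ s in (0:ℝ)..x, Xt (n - 1) s * (f₀ s ^ 2) ^ ((-1 : ℤ) ^ (n - 1)))
    (φ : ℕ → ℝ → ℝ)
    (hφ : ∀ k x, φ k x = if Odd k then f₀ x * X k x else f₀ x * Xt k x) :
    ∃ c : ℝ,
      (∀ x ∈ Icc 0 d, ∀ n : ℕ,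
        |φ n x| ≤ c * max 1 (f₀ x * sSup ((fun s => |1 / f₀ s|) '' Icc 0 x)) * x ^ n) ∧
      (∀ K : Set ℂ, IsCompact K →
        (∀ x ∈ Icc 0 d, ∀ ω ∈ K,
          Summable fun n : ℕ =>
            ‖(-(Complex.I * ω)) ^ n * (φ n x : ℂ) / (Nat.factorial n)‖) ∧
        TendstoUniformlyOn
          (fun N (p : ℝ × ℂ) => ∑ n ∈ Finset.range N,
            (-(Complex.I * p.2)) ^ n * (φ n p.1 : ℂ) / (Nat.factorial n))
          (fun p => ∑' n : ℕ,
            (-(Complex.I * p.2)) ^ n * (φ n p.1 : ℂ) / (Nat.factorial n))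
          atTop (Icc 0 d ×ˢ K)) :=
  formal_powers_bound_and_convergence_general d f₀ hf₀C2 hf₀ne X Xt hX0 hXt0 hX hXt φ hφ
end

section
/- Suppose u(ω,x) = e^{-iωx}(1 + Σ_{n=0}^∞ (-1)^n a_n(x)(iω)^n/(1-iω)^{n+1}) where Σ a_n(x)L_n(t) converges in L²(0,∞;e^{-t}) to a function a(x,·) for each x. Define the partial sum u_N(ω,x) = e^{-iωx}(1 + Σ_{n=0}^N (-1)^n a_n(x)(iω)^n/(1-iω)^{n+1}). Then for all real ω, |u(ω,x) - u_N(ω,x)| ≤ ε_N(x) where ε_N(x) = (∫₀^∞ e^{-t}|a(x,t) - Σ_{n=0}^N a_n(x)L_n(t)|² dt)^{1/2}; moreover ε_N(x) → 0 as N → ∞ and ε_N(x) does not depend on ω. -/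
open MeasureTheory Set Filter Topology

noncomputable def laguerre (n : ℕ) (x : ℝ) : ℝ :=
  ∑ k ∈ Finset.range (n + 1), ((-1 : ℝ) ^ k / (Nat.factorial k)) * (n.choose k) * x ^ k

/-!
Write `s = 1 - iω`. Since `∫₀^∞ Lₙ(t) e^{-st} dt = (s - 1)ⁿ / sⁿ⁺¹`, the `n`-th term of the series
is `cₙ ∫₀^∞ Lₙ(t) e^{iωt} e^{-t} dt`, so the `N`-th partial sum differs from
`∫₀^∞ a(t) e^{iωt} e^{-t} dt` by the `L²(e^{-t})`-pairing of `a - Σ_{n ≤ N} cₙ Lₙ` with `e^{iωt}`.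
As `|e^{iωt}| = 1` and `∫₀^∞ e^{-t} dt = 1`, Cauchy–Schwarz bounds this by `ε_N`, which tends to
`0` by assumption. Cauchy–Schwarz together with `‖Lₙ‖ = 1` also gives `|cₙ| ≤ ‖a‖`, so the series
converges absolutely (its ratio is `|ω| / |1 - iω| < 1`) and its sum is that integral.

The identity `‖Lₙ‖ = 1` rests on the moments `∫₀^∞ tʲ Lₙ(t) e^{-t} dt = (-1)ⁿ j! C(j, n)`: up to
sign and `j!` they are the `n`-th forward difference at `0` of the degree-`j` polynomial
`k ↦ C(k + j, j)`, which vanishes for `j < n`.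
-/

open scoped Nat

lemma integrableOn_pow_mul_exp_neg_mul {b : ℝ} (hb : 0 < b) (k : ℕ) :
    IntegrableOn (fun t : ℝ => t ^ k * Real.exp (-(b * t))) (Ioi 0) := by
  simpa [Real.rpow_natCast] using
    integrableOn_rpow_mul_exp_neg_mul_rpow (s := k) (by linarith [k.cast_nonneg (α := ℝ)])
      one_pos hb

lemma integrableOn_pow_mul_exp_neg (k : ℕ) :
    IntegrableOn (fun t : ℝ => t ^ k * Real.exp (-t)) (Ioi 0) := by
  simpa using integrableOn_pow_mul_exp_neg_mul one_pos k

lemma integral_pow_mul_exp_neg (k : ℕ) :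
    ∫ t in Ioi (0 : ℝ), t ^ k * Real.exp (-t) = k ! := by
  rw [← Real.Gamma_nat_eq_factorial, Real.Gamma_eq_integral (by positivity)]
  refine setIntegral_congr_fun measurableSet_Ioi fun t _ => ?_
  rw [add_sub_cancel_right, Real.rpow_natCast, mul_comm]

lemma norm_pow_mul_cexp_neg_mul (s : ℂ) (k : ℕ) {t : ℝ} (ht : 0 ≤ t) :
    ‖(t : ℂ) ^ k * Complex.exp (-(s * t))‖ = t ^ k * Real.exp (-(s.re * t)) := by
  rw [norm_mul, norm_pow, Complex.norm_exp, Complex.norm_real, Real.norm_of_nonneg ht]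
  simp [Complex.mul_re]

lemma integrableOn_pow_mul_cexp_neg_mul {s : ℂ} (hs : 0 < s.re) (k : ℕ) :
    IntegrableOn (fun t : ℝ => (t : ℂ) ^ k * Complex.exp (-(s * t))) (Ioi 0) := by
  refine (integrableOn_pow_mul_exp_neg_mul hs k).mono'
    (by fun_prop : Continuous _).aestronglyMeasurable ?_
  filter_upwards [ae_restrict_mem measurableSet_Ioi] with t ht
  exact (norm_pow_mul_cexp_neg_mul s k (le_of_lt ht)).le

lemma integral_pow_mul_cexp_neg_mul {s : ℂ} (hs : 0 < s.re) (k : ℕ) :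
    ∫ t in Ioi (0 : ℝ), (t : ℂ) ^ k * Complex.exp (-(s * t)) = k ! / s ^ (k + 1) := by
  have hs0 : s ≠ 0 := by rintro rfl; simp at hs
  induction k with
  | zero =>
    simpa [neg_div, div_neg] using integral_exp_mul_complex_Ioi (a := -s) (by simpa using hs) 0
  | succ k ih =>
    have hint := integrableOn_pow_mul_cexp_neg_mul hs
    set F : ℝ → ℂ := fun t => -s⁻¹ * ((t : ℂ) ^ (k + 1) * Complex.exp (-(s * t)))
    set F' : ℝ → ℂ := fun t => (t : ℂ) ^ (k + 1) * Complex.exp (-(s * t)) -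
      (k + 1) / s * ((t : ℂ) ^ k * Complex.exp (-(s * t)))
    have hF : ∀ t, HasDerivAt F (F' t) t := by
      intro t
      have hpow : HasDerivAt (fun t : ℝ => (t : ℂ) ^ (k + 1)) ((k + 1) * (t : ℂ) ^ k) t := by
        simpa using (hasDerivAt_pow (k + 1) (t : ℂ)).comp_ofReal
      have hexp : HasDerivAt (fun t : ℝ => Complex.exp (-(s * t)))
          (-s * Complex.exp (-(s * t))) t := by
        simpa [mul_comm] using ((hasDerivAt_id (t : ℂ)).const_mul s).neg.cexp.comp_ofReal
      refine ((hpow.mul hexp).const_mul (-s⁻¹)).congr_deriv ?_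
      simp only [F']
      field_simp
      ring
    have hF'int : IntegrableOn F' (Ioi 0) := (hint (k + 1)).sub ((hint k).const_mul _)
    have hFlim : Tendsto F atTop (𝓝 0) :=
      tendsto_zero_of_hasDerivAt_of_integrableOn_Ioi (fun t _ => hF t) hF'int
        ((hint (k + 1)).const_mul _)
    have hF0 : F 0 = 0 := by simp [F]
    have hFTC := integral_Ioi_of_hasDerivAt_of_tendsto' (fun t _ => hF t) hF'int hFlim
    rw [integral_sub (hint (k + 1)) ((hint k).const_mul _), integral_const_mul, ih, hF0,
      sub_zero, sub_eq_zero] at hFTC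
    rw [hFTC, Nat.factorial_succ]
    push_cast
    field_simp
    ring

lemma continuous_laguerre (n : ℕ) : Continuous (laguerre n) := by
  unfold laguerre
  fun_prop

lemma laguerre_mul_cexp_neg_mul (n : ℕ) (s : ℂ) (t : ℝ) :
    (laguerre n t : ℂ) * Complex.exp (-(s * t)) = ∑ k ∈ Finset.range (n + 1),
      (-1) ^ k / k ! * n.choose k * ((t : ℂ) ^ k * Complex.exp (-(s * t))) := by
  simp only [laguerre, Complex.ofReal_sum, Finset.sum_mul]
  push_cast
  exact Finset.sum_congr rfl fun k _ => by ring

lemma integrableOn_laguerre_mul_cexp_neg_mul (n : ℕ) {s : ℂ} (hs : 0 < s.re) :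
    IntegrableOn (fun t : ℝ => (laguerre n t : ℂ) * Complex.exp (-(s * t))) (Ioi 0) := by
  simp only [laguerre_mul_cexp_neg_mul]
  exact integrable_finsetSum _ fun k _ => (integrableOn_pow_mul_cexp_neg_mul hs k).const_mul _

lemma integral_laguerre_mul_cexp_neg_mul (n : ℕ) {s : ℂ} (hs : 0 < s.re) :
    ∫ t in Ioi (0 : ℝ), (laguerre n t : ℂ) * Complex.exp (-(s * t)) =
      (s - 1) ^ n / s ^ (n + 1) := by
  have hs0 : s ≠ 0 := by rintro rfl; simp at hs
  simp only [laguerre_mul_cexp_neg_mul]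
  rw [integral_finsetSum _ fun k _ => (integrableOn_pow_mul_cexp_neg_mul hs k).const_mul _]
  have hbinom : (s - 1) ^ n / s ^ (n + 1) = s⁻¹ * (-s⁻¹ + 1) ^ n := by
    rw [show -s⁻¹ + 1 = (s - 1) / s by field_simp; ring, div_pow, pow_succ']
    field_simp
  rw [hbinom, add_pow, Finset.mul_sum]
  refine Finset.sum_congr rfl fun k _ => ?_
  rw [integral_const_mul, integral_pow_mul_cexp_neg_mul hs k, neg_pow s⁻¹, inv_pow, one_pow,
    pow_succ']
  field_simp [Nat.factorial_ne_zero]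

lemma sum_range_neg_one_pow_mul_choose_mul_add_choose (n j : ℕ) :
    ∑ k ∈ Finset.range (n + 1), (-1 : ℤ) ^ k * n.choose k * (k + j).choose j
      = (-1) ^ n * j.choose n := by
  have hvandermonde : (fun k : ℕ => ((k + j).choose j : ℤ)) =
      ∑ p ∈ Finset.HasAntidiagonal.antidiagonal j,
        (j.choose p.2 : ℤ) • fun k : ℕ => (k.choose p.1 : ℤ) := by
    ext k
    simp [Nat.add_choose_eq, Finset.sum_apply, mul_comm]
  have hdiff : (fwdDiff 1)^[n] (fun k : ℕ => ((k + j).choose j : ℤ)) 0 = j.choose n := by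
    rw [hvandermonde, fwdDiff_iter_finsetSum, Finset.sum_apply]
    simp only [fwdDiff_iter_const_smul, Pi.smul_apply, fwdDiff_iter_choose_zero, smul_eq_mul,
      mul_ite, mul_one, mul_zero]
    rw [Finset.Nat.sum_antidiagonal_eq_sum_range_succ_mk]
    simp only [Finset.mem_range, Finset.sum_ite_eq]
    split_ifs with hnj
    · rw [Nat.choose_symm (by omega)]
    · rw [Nat.choose_eq_zero_of_lt (by omega), Nat.cast_zero]
  rw [fwdDiff_iter_eq_sum_shift] at hdiff
  rw [← hdiff, Finset.mul_sum]
  refine Finset.sum_congr rfl fun k hk => ?_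
  have hsign : (-1 : ℤ) ^ k = (-1) ^ n * (-1) ^ (n - k) := by
    rw [← pow_add, show n + (n - k) = k + 2 * (n - k) by grind, pow_add, pow_mul]
    simp
  simp [hsign, mul_assoc]

lemma pow_mul_laguerre_mul_exp_neg (j n : ℕ) (t : ℝ) :
    t ^ j * laguerre n t * Real.exp (-t) =
      ∑ k ∈ Finset.range (n + 1), (-1) ^ k / k ! * n.choose k * (t ^ (j + k) * Real.exp (-t)) := by
  simp only [laguerre, Finset.mul_sum, Finset.sum_mul, pow_add]
  exact Finset.sum_congr rfl fun k _ => by ring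

lemma integrableOn_pow_mul_laguerre_mul_exp_neg (j n : ℕ) :
    IntegrableOn (fun t => t ^ j * laguerre n t * Real.exp (-t)) (Ioi 0) := by
  simp only [pow_mul_laguerre_mul_exp_neg]
  exact integrable_finsetSum _ fun k _ => (integrableOn_pow_mul_exp_neg (j + k)).const_mul _

lemma integral_pow_mul_laguerre_mul_exp_neg (j n : ℕ) :
    ∫ t in Ioi (0 : ℝ), t ^ j * laguerre n t * Real.exp (-t) = (-1) ^ n * j ! * j.choose n := by
  simp only [pow_mul_laguerre_mul_exp_neg]
  rw [integral_finsetSum _ fun k _ => (integrableOn_pow_mul_exp_neg (j + k)).const_mul _]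
  simp only [integral_const_mul, integral_pow_mul_exp_neg]
  have hterm : ∀ k, (-1 : ℝ) ^ k / k ! * n.choose k * (j + k) ! =
      j ! * ((-1) ^ k * n.choose k * (k + j).choose j) := fun k => by
    rw [add_comm j k, ← Nat.add_choose_mul_factorial_mul_factorial]
    push_cast
    field_simp
  have hsum : ∑ k ∈ Finset.range (n + 1), (-1 : ℝ) ^ k * n.choose k * (k + j).choose j =
      (-1) ^ n * j.choose n := by
    exact_mod_cast sum_range_neg_one_pow_mul_choose_mul_add_choose n j
  simp only [hterm, ← Finset.mul_sum, hsum]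
  ring

lemma exp_neg_mul_laguerre_sq (n : ℕ) (t : ℝ) :
    Real.exp (-t) * laguerre n t ^ 2 = ∑ j ∈ Finset.range (n + 1),
      (-1) ^ j / j ! * n.choose j * (t ^ j * laguerre n t * Real.exp (-t)) := by
  rw [sq]
  nth_rw 1 [laguerre]
  simp only [Finset.sum_mul, Finset.mul_sum]
  exact Finset.sum_congr rfl fun j _ => by ring

lemma integrableOn_exp_neg_mul_laguerre_sq (n : ℕ) :
    IntegrableOn (fun t => Real.exp (-t) * laguerre n t ^ 2) (Ioi 0) := by
  simp only [exp_neg_mul_laguerre_sq]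
  exact integrable_finsetSum _ fun j _ =>
    (integrableOn_pow_mul_laguerre_mul_exp_neg j n).const_mul _

lemma integral_exp_neg_mul_laguerre_sq (n : ℕ) :
    ∫ t in Ioi (0 : ℝ), Real.exp (-t) * laguerre n t ^ 2 = 1 := by
  simp only [exp_neg_mul_laguerre_sq]
  rw [integral_finsetSum _ fun j _ => (integrableOn_pow_mul_laguerre_mul_exp_neg j n).const_mul _,
    Finset.sum_eq_single_of_mem n (Finset.self_mem_range_succ n) fun j hj hjn => ?_]
  · rw [integral_const_mul, integral_pow_mul_laguerre_mul_exp_neg, Nat.choose_self]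
    field_simp
    simp [← pow_mul, pow_mul']
  · rw [integral_const_mul, integral_pow_mul_laguerre_mul_exp_neg,
      Nat.choose_eq_zero_of_lt (lt_of_le_of_ne (Finset.mem_range_succ_iff.mp hj) hjn)]
    simp

lemma norm_sqrt_mul_sq {r : ℝ} (hr : 0 ≤ r) (z : ℂ) :
    ‖(Real.sqrt r : ℂ) * z‖ ^ 2 = r * ‖z‖ ^ 2 := by
  rw [norm_mul, Complex.norm_real, Real.norm_of_nonneg (Real.sqrt_nonneg _), mul_pow,
    Real.sq_sqrt hr]

section WeightedCauchySchwarz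

variable {α : Type*} [MeasurableSpace α] {μ : Measure α} {w : α → ℝ} {f g : α → ℂ}

lemma memLp_two_sqrt_weight_mul (hw0 : ∀ x, 0 ≤ w x) (hw : AEStronglyMeasurable w μ)
    (hf : AEStronglyMeasurable f μ) (hf2 : Integrable (fun x => w x * ‖f x‖ ^ 2) μ) :
    MemLp (fun x => (Real.sqrt (w x) : ℂ) * f x) 2 μ := by
  have hmeas : AEStronglyMeasurable (fun x => (Real.sqrt (w x) : ℂ) * f x) μ :=
    (Complex.continuous_ofReal.comp_aestronglyMeasurable
      (Real.continuous_sqrt.comp_aestronglyMeasurable hw)).mul hf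
  rw [memLp_two_iff_integrable_sq_norm hmeas]
  simpa only [fun x => norm_sqrt_mul_sq (hw0 x)] using hf2

lemma integrable_mul_mul_weight (hw0 : ∀ x, 0 ≤ w x) (hw : AEStronglyMeasurable w μ)
    (hf : AEStronglyMeasurable f μ) (hg : AEStronglyMeasurable g μ)
    (hf2 : Integrable (fun x => w x * ‖f x‖ ^ 2) μ)
    (hg2 : Integrable (fun x => w x * ‖g x‖ ^ 2) μ) :
    Integrable (fun x => f x * g x * w x) μ := by
  refine ((memLp_two_sqrt_weight_mul hw0 hw hf hf2).integrable_mul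
    (memLp_two_sqrt_weight_mul hw0 hw hg hg2)).congr (Eventually.of_forall fun x => ?_)
  rw [Pi.mul_apply, mul_mul_mul_comm, ← Complex.ofReal_mul, Real.mul_self_sqrt (hw0 x)]
  ring

lemma norm_integral_mul_mul_weight_le (hw0 : ∀ x, 0 ≤ w x) (hw : AEStronglyMeasurable w μ)
    (hf : AEStronglyMeasurable f μ) (hg : AEStronglyMeasurable g μ)
    (hf2 : Integrable (fun x => w x * ‖f x‖ ^ 2) μ)
    (hg2 : Integrable (fun x => w x * ‖g x‖ ^ 2) μ) :
    ‖∫ x, f x * g x * w x ∂μ‖ ≤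
      Real.sqrt (∫ x, w x * ‖f x‖ ^ 2 ∂μ) * Real.sqrt (∫ x, w x * ‖g x‖ ^ 2 ∂μ) := by
  have hCS := integral_mul_norm_le_Lp_mul_Lq Real.HolderConjugate.two_two
    (by simpa using memLp_two_sqrt_weight_mul hw0 hw hf hf2)
    (by simpa using memLp_two_sqrt_weight_mul hw0 hw hg hg2)
  simp only [Real.rpow_two, fun x => norm_sqrt_mul_sq (hw0 x), ← Real.sqrt_eq_rpow] at hCS
  refine (norm_integral_le_integral_norm _).trans (le_of_eq_of_le ?_ hCS)
  congr 1 with x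
  rw [norm_mul, norm_mul, norm_mul, norm_mul, Complex.norm_real, Complex.norm_real,
    Real.norm_of_nonneg (hw0 x), Real.norm_of_nonneg (Real.sqrt_nonneg _),
    mul_mul_mul_comm, Real.mul_self_sqrt (hw0 x)]
  ring

end WeightedCauchySchwarz

lemma abs_lt_norm_one_sub_I_mul (ω : ℝ) : |ω| < ‖1 - Complex.I * ω‖ := by
  have hnorm : ‖1 - Complex.I * ω‖ ^ 2 = 1 + ω ^ 2 := by
    rw [Complex.sq_norm, Complex.normSq_apply]
    simp [sq]
  exact abs_lt_of_sq_lt_sq (by rw [hnorm]; linarith) (norm_nonneg _)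

lemma summable_laguerre_series (ω : ℝ) {c : ℕ → ℂ} {K : ℝ} (hc : ∀ n, ‖c n‖ ≤ K) :
    Summable fun n : ℕ => (-1) ^ n * c n * (Complex.I * ω) ^ n / (1 - Complex.I * ω) ^ (n + 1) := by
  set r := ‖1 - Complex.I * ω‖
  have hωr : |ω| < r := abs_lt_norm_one_sub_I_mul ω
  have hr : 0 < r := (abs_nonneg ω).trans_lt hωr
  refine Summable.of_norm_bounded ((summable_geometric_of_lt_one (by positivity)
    ((div_lt_one hr).2 hωr)).mul_left (K / r)) fun n => ?_
  have hterm : ‖(-1) ^ n * c n * (Complex.I * ω) ^ n / (1 - Complex.I * ω) ^ (n + 1)‖ =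
      ‖c n‖ / r * (|ω| / r) ^ n := by
    simp only [norm_div, norm_mul, norm_pow, norm_neg, norm_one, one_pow, one_mul, Complex.norm_I,
      Complex.norm_real, Real.norm_eq_abs, r]
    field_simp
    ring
  rw [hterm]
  gcongr
  exact hc n

lemma integrableOn_sum_laguerre_mul_cexp_neg_mul (c : ℕ → ℂ) (N : ℕ) {s : ℂ} (hs : 0 < s.re) :
    IntegrableOn (fun t : ℝ => (∑ n ∈ Finset.range (N + 1), c n * (laguerre n t : ℂ)) *
      Complex.exp (-(s * t))) (Ioi 0) := by
  simp only [Finset.sum_mul, mul_assoc]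
  exact integrable_finsetSum _ fun n _ => (integrableOn_laguerre_mul_cexp_neg_mul n hs).const_mul _

lemma integral_sum_laguerre_mul_cexp_neg_mul (c : ℕ → ℂ) (N : ℕ) {s : ℂ} (hs : 0 < s.re) :
    ∫ t in Ioi (0 : ℝ), (∑ n ∈ Finset.range (N + 1), c n * (laguerre n t : ℂ)) *
      Complex.exp (-(s * t)) = ∑ n ∈ Finset.range (N + 1), c n * ((s - 1) ^ n / s ^ (n + 1)) := by
  simp only [Finset.sum_mul, mul_assoc]
  rw [integral_finsetSum _ fun n _ => (integrableOn_laguerre_mul_cexp_neg_mul n hs).const_mul _]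
  simp only [integral_const_mul, integral_laguerre_mul_cexp_neg_mul _ hs]

lemma cexp_neg_one_sub_I_mul_mul (ω t : ℝ) :
    Complex.exp (-((1 - Complex.I * ω) * t)) = Complex.exp (Complex.I * ω * t) * Real.exp (-t) := by
  rw [Complex.ofReal_exp, ← Complex.exp_add]
  congr 1
  push_cast
  ring

lemma exp_neg_mul_norm_cexp_I_mul_sq (ω t : ℝ) :
    Real.exp (-t) * ‖Complex.exp (Complex.I * ω * t)‖ ^ 2 = Real.exp (-t) := by
  simp [Complex.norm_exp]

section FourierLaplace

variable {F : ℝ → ℂ} (ω : ℝ)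

lemma integrableOn_mul_cexp_neg_one_sub_I_mul
    (hF : AEStronglyMeasurable F (volume.restrict (Ioi 0)))
    (hF2 : IntegrableOn (fun t => Real.exp (-t) * ‖F t‖ ^ 2) (Ioi 0)) :
    IntegrableOn (fun t => F t * Complex.exp (-((1 - Complex.I * ω) * t))) (Ioi 0) := by
  simp only [cexp_neg_one_sub_I_mul_mul, ← mul_assoc]
  refine integrable_mul_mul_weight (g := fun t : ℝ => Complex.exp (Complex.I * ω * t))
    (fun t => (Real.exp_pos (-t)).le) (by fun_prop) hF (by fun_prop) hF2 ?_
  simp only [exp_neg_mul_norm_cexp_I_mul_sq]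
  exact integrableOn_exp_neg_Ioi 0

lemma norm_integral_mul_cexp_neg_one_sub_I_mul_le
    (hF : AEStronglyMeasurable F (volume.restrict (Ioi 0)))
    (hF2 : IntegrableOn (fun t => Real.exp (-t) * ‖F t‖ ^ 2) (Ioi 0)) :
    ‖∫ t in Ioi (0 : ℝ), F t * Complex.exp (-((1 - Complex.I * ω) * t))‖ ≤
      Real.sqrt (∫ t in Ioi (0 : ℝ), Real.exp (-t) * ‖F t‖ ^ 2) := by
  have hCS := norm_integral_mul_mul_weight_le (g := fun t : ℝ => Complex.exp (Complex.I * ω * t))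
    (fun t => (Real.exp_pos (-t)).le) (by fun_prop) hF (by fun_prop) hF2
    (by simp only [exp_neg_mul_norm_cexp_I_mul_sq]; exact integrableOn_exp_neg_Ioi 0)
  simp only [exp_neg_mul_norm_cexp_I_mul_sq, integral_exp_neg_Ioi_zero, Real.sqrt_one,
    mul_one] at hCS
  simpa only [cexp_neg_one_sub_I_mul_mul, ← mul_assoc] using hCS

end FourierLaplace

section LaguerreSeries

variable {f : ℝ → ℂ} {c : ℕ → ℂ}

lemma norm_integral_mul_laguerre_mul_exp_neg_le
    (hf : AEStronglyMeasurable f (volume.restrict (Ioi 0)))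
    (hf2 : IntegrableOn (fun t => Real.exp (-t) * ‖f t‖ ^ 2) (Ioi 0)) (n : ℕ) :
    ‖∫ t in Ioi (0 : ℝ), f t * (laguerre n t : ℂ) * Real.exp (-t)‖ ≤
      Real.sqrt (∫ t in Ioi (0 : ℝ), Real.exp (-t) * ‖f t‖ ^ 2) := by
  have hL : ∀ t, Real.exp (-t) * ‖(laguerre n t : ℂ)‖ ^ 2 = Real.exp (-t) * laguerre n t ^ 2 := by
    simp
  have hCS := norm_integral_mul_mul_weight_le (g := fun t => (laguerre n t : ℂ))
    (fun t => (Real.exp_pos (-t)).le)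
    (by fun_prop : Continuous fun t : ℝ => Real.exp (-t)).aestronglyMeasurable hf
    (Complex.continuous_ofReal.comp (continuous_laguerre n)).aestronglyMeasurable hf2
    (by simp only [hL]; exact integrableOn_exp_neg_mul_laguerre_sq n)
  simpa only [hL, integral_exp_neg_mul_laguerre_sq, Real.sqrt_one, mul_one] using hCS

lemma norm_integral_mul_cexp_sub_sum_le (ω : ℝ)
    (hf : AEStronglyMeasurable f (volume.restrict (Ioi 0)))
    (hf2 : IntegrableOn (fun t => Real.exp (-t) * ‖f t‖ ^ 2) (Ioi 0)) {N : ℕ}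
    (hN : IntegrableOn (fun t => Real.exp (-t) *
      ‖f t - ∑ n ∈ Finset.range (N + 1), c n * (laguerre n t : ℂ)‖ ^ 2) (Ioi 0)) :
    ‖(∫ t in Ioi (0 : ℝ), f t * Complex.exp (-((1 - Complex.I * ω) * t))) -
        ∑ n ∈ Finset.range (N + 1),
          (-1) ^ n * c n * (Complex.I * ω) ^ n / (1 - Complex.I * ω) ^ (n + 1)‖ ≤
      Real.sqrt (∫ t in Ioi (0 : ℝ), Real.exp (-t) *
        ‖f t - ∑ n ∈ Finset.range (N + 1), c n * (laguerre n t : ℂ)‖ ^ 2) := by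
  have hs : 0 < (1 - Complex.I * ω).re := by simp
  have hSmeas : AEStronglyMeasurable (fun t => ∑ n ∈ Finset.range (N + 1),
      c n * (laguerre n t : ℂ)) (volume.restrict (Ioi 0)) := by
    have := continuous_laguerre
    fun_prop
  have hterms : ∑ n ∈ Finset.range (N + 1),
        (-1) ^ n * c n * (Complex.I * ω) ^ n / (1 - Complex.I * ω) ^ (n + 1) =
      ∑ n ∈ Finset.range (N + 1),
        c n * ((1 - Complex.I * ω - 1) ^ n / (1 - Complex.I * ω) ^ (n + 1)) :=
    Finset.sum_congr rfl fun n _ => by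
      rw [sub_sub_cancel_left, neg_pow]
      ring
  rw [hterms, ← integral_sum_laguerre_mul_cexp_neg_mul c N hs,
    ← integral_sub (integrableOn_mul_cexp_neg_one_sub_I_mul ω hf hf2)
      (integrableOn_sum_laguerre_mul_cexp_neg_mul c N hs)]
  simp only [← sub_mul]
  exact norm_integral_mul_cexp_neg_one_sub_I_mul_le ω (hf.sub hSmeas) hN

lemma hasSum_laguerre_series (ω : ℝ)
    (hf : AEStronglyMeasurable f (volume.restrict (Ioi 0)))
    (hf2 : IntegrableOn (fun t => Real.exp (-t) * ‖f t‖ ^ 2) (Ioi 0))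
    (hN : ∀ N, IntegrableOn (fun t => Real.exp (-t) *
      ‖f t - ∑ n ∈ Finset.range (N + 1), c n * (laguerre n t : ℂ)‖ ^ 2) (Ioi 0))
    (hconv : Tendsto (fun N => ∫ t in Ioi (0 : ℝ), Real.exp (-t) *
      ‖f t - ∑ n ∈ Finset.range (N + 1), c n * (laguerre n t : ℂ)‖ ^ 2) atTop (𝓝 0))
    (hc : ∀ n, c n = ∫ t in Ioi (0 : ℝ), f t * (laguerre n t : ℂ) * Real.exp (-t)) :
    HasSum (fun n => (-1) ^ n * c n * (Complex.I * ω) ^ n / (1 - Complex.I * ω) ^ (n + 1))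
      (∫ t in Ioi (0 : ℝ), f t * Complex.exp (-((1 - Complex.I * ω) * t))) := by
  -- `tsum` needs unconditional convergence, which the bound `‖c n‖ ≤ ‖f‖` provides
  have hsum := summable_laguerre_series ω (c := c) fun n => by
    rw [hc n]
    exact norm_integral_mul_laguerre_mul_exp_neg_le hf hf2 n
  rw [hsum.hasSum_iff_tendsto_nat, ← tendsto_add_atTop_iff_nat 1,
    tendsto_iff_norm_sub_tendsto_zero]
  refine squeeze_zero (fun _ => norm_nonneg _) (fun N => ?_) (by simpa using hconv.sqrt)
  rw [norm_sub_rev]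
  exact norm_integral_mul_cexp_sub_sum_le ω hf hf2 (hN N)

end LaguerreSeries

theorem truncation_estimate (a : ℝ → ℝ → ℂ) (c : ℕ → ℝ → ℂ)
    (hmeas : ∀ x, AEStronglyMeasurable (a x) (volume.restrict (Ioi (0 : ℝ))))
    (hL2 : ∀ x, IntegrableOn (fun t => Real.exp (-t) * ‖a x t‖ ^ 2) (Ioi (0 : ℝ)))
    (hL2N : ∀ x N, IntegrableOn
      (fun t => Real.exp (-t) *
        ‖a x t - ∑ n ∈ Finset.range (N + 1), c n x * (laguerre n t : ℂ)‖ ^ 2) (Ioi (0 : ℝ)))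
    (hconv : ∀ x, Tendsto (fun N => ∫ t in Ioi (0 : ℝ),
        Real.exp (-t) *
          ‖a x t - ∑ n ∈ Finset.range (N + 1), c n x * (laguerre n t : ℂ)‖ ^ 2)
      atTop (𝓝 0))
    (hcoef : ∀ n x, c n x = ∫ t in Ioi (0 : ℝ), a x t * (laguerre n t : ℂ) * Real.exp (-t))
    (u : ℝ → ℝ → ℂ)
    (hu : ∀ (ω x : ℝ), u ω x = Complex.exp (-Complex.I * ω * x) *
      (1 + ∑' n : ℕ, (-1) ^ n * c n x * (Complex.I * ω) ^ n / (1 - Complex.I * ω) ^ (n + 1)))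
    (uN : ℕ → ℝ → ℝ → ℂ)
    (huN : ∀ (N : ℕ) (ω x : ℝ), uN N ω x = Complex.exp (-Complex.I * ω * x) *
      (1 + ∑ n ∈ Finset.range (N + 1),
        (-1) ^ n * c n x * (Complex.I * ω) ^ n / (1 - Complex.I * ω) ^ (n + 1)))
    (ε : ℕ → ℝ → ℝ)
    (hε : ∀ N x, ε N x = Real.sqrt (∫ t in Ioi (0 : ℝ),
      Real.exp (-t) *
        ‖a x t - ∑ n ∈ Finset.range (N + 1), c n x * (laguerre n t : ℂ)‖ ^ 2)) :
    (∀ (ω x : ℝ) (N : ℕ), ‖u ω x - uN N ω x‖ ≤ ε N x) ∧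
    (∀ x, Tendsto (fun N => ε N x) atTop (𝓝 0)) := by
  refine ⟨fun ω x N => ?_, fun x => by simpa only [hε, Real.sqrt_zero] using (hconv x).sqrt⟩
  have hsum := hasSum_laguerre_series ω (hmeas x) (hL2 x) (hL2N x) (hconv x) (hcoef · x)
  have hphase : ‖Complex.exp (-Complex.I * ω * x)‖ = 1 := by
    simp [Complex.norm_exp]
  rw [hu, huN, ← mul_sub, norm_mul, hphase, one_mul, add_sub_add_left_eq_sub, hsum.tsum_eq, hε]
  exact norm_integral_mul_cexp_sub_sum_le ω (hmeas x) (hL2 x) (hL2N x N)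
end
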